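/- arXiv:1003.0981 — 10 statements merged into one kernel-verified Lean document; each statement's English description precedes it below -/
import Mathlib

section
/- Let $a_1 \in R$ and $p_{i,j} \in R$ ($i \le j$) be elements of a commutative ring, and define $a_{n+1} = \sum_{i=1}^n p_{i,n} a_i$ for $n \ge 1$. Let $A_n$ be the $n \times n$ upper Hessenberg matrix with entries $(A_n)_{i,j} = p_{i,j}$ for $i \le j$, $(A_n)_{i+1,i} = -1$, and $0$ elsewhere. Then $a_{n+1} = a_1 \det A_n$ for all $n \ge 1$. -/
/-!
The vector `x = (a₁, …, aₙ)` satisfies `x Aₙ = aₙ₊₁ eₙ`: column `j` of `Aₙ` computes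
`∑_{i ≤ j} p_{i,j} aᵢ - a_{j+1}`, which vanishes by the recurrence except in the last column,
where no subdiagonal entry is present. Cramer's rule for this row system gives
`det Aₙ · a₁ = aₙ₊₁ · det B`, where `B` is `Aₙ` with its first row replaced by `eₙ`. Expanding
`det B` along that row leaves the minor on rows `2, …, n` and columns `1, …, n - 1`, which is
upper triangular with `-1` on the diagonal, so `det B = (-1)^(n-1) (-1)^(n-1) = 1`.
-/

open Matrix Finset

def hessenberg {R : Type*} [Ring R] (p : ℕ → ℕ → R) (n : ℕ) : Matrix (Fin n) (Fin n) R :=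
  of fun i j => if (i : ℕ) ≤ j then p (i + 1) (j + 1) else if (i : ℕ) = j + 1 then -1 else 0

theorem Matrix.det_mul_eq_det_updateRow_of_vecMul_eq {n R : Type*} [Fintype n] [DecidableEq n]
    [CommRing R] (M : Matrix n n R) {x b : n → R} (h : x ᵥ* M = b) (i : n) :
    M.det * x i = (M.updateRow i b).det := by
  have hcramer : cramer Mᵀ b = M.det • x := by
    rw [← h, ← mulVec_transpose, cramer_eq_adjugate_mulVec, mulVec_mulVec, adjugate_mul,
      smul_mulVec, one_mulVec, det_transpose]
  simpa [cramer_transpose_apply] using (congrFun hcramer i).symm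

section

variable {R : Type*} [CommRing R]

theorem vecMul_hessenberg_eq_single {a : ℕ → R} {p : ℕ → ℕ → R}
    (ha : ∀ n, 1 ≤ n → a (n + 1) = ∑ i ∈ Icc 1 n, p i n * a i) (m : ℕ) :
    (fun i : Fin (m + 1) => a (i + 1)) ᵥ* hessenberg p (m + 1) =
      Pi.single (Fin.last m) (a (m + 2)) := by
  ext j
  have hrec : ∑ i ∈ range (j + 1), p (i + 1) (j + 1) * a (i + 1) = a (j + 2) := by
    rw [ha (j + 1) (Nat.le_add_left 1 j), range_eq_Ico,
      sum_Ico_add' (fun i => p i (j + 1) * a i) 0 (j + 1) 1]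
    rfl
  have hsummand : ∀ i : ℕ,
      a (i + 1) * (if i ≤ j then p (i + 1) (j + 1) else if i = j + 1 then -1 else 0) =
        (if i ≤ j then p (i + 1) (j + 1) * a (i + 1) else 0) -
          (if i = j + 1 then a (i + 1) else 0) := by
    intro i
    split_ifs <;> first | omega | ring
  have hfilter : {i ∈ range (m + 1) | i ≤ (j : ℕ)} = range (j + 1) := by
    ext i
    simp only [mem_filter, mem_range]
    omega
  calc ((fun i : Fin (m + 1) => a (i + 1)) ᵥ* hessenberg p (m + 1)) j
      = ∑ i ∈ range (m + 1),
          a (i + 1) * (if i ≤ j then p (i + 1) (j + 1) else if i = j + 1 then -1 else 0) :=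
        Fin.sum_univ_eq_sum_range (fun i => a (i + 1) *
          (if i ≤ j then p (i + 1) (j + 1) else if i = j + 1 then -1 else 0)) (m + 1)
    _ = a (j + 2) - if (j : ℕ) + 1 ∈ range (m + 1) then a (j + 2) else 0 := by
      rw [sum_congr rfl fun i _ => hsummand i, sum_sub_distrib, sum_ite_eq', ← sum_filter,
        hfilter, hrec]
    _ = (Pi.single (Fin.last m) (a (m + 2)) : Fin (m + 1) → R) j := by
      rcases eq_or_ne j (Fin.last m) with rfl | hj
      · simp
      · have hjm : (j : ℕ) < m := Fin.val_lt_last hj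
        rw [Pi.single_eq_of_ne hj, if_pos (mem_range.2 (by omega)), sub_self]

theorem det_hessenberg_submatrix_succ_castSucc (p : ℕ → ℕ → R) (m : ℕ) :
    ((hessenberg p (m + 1)).submatrix Fin.succ Fin.castSucc).det = (-1) ^ m := by
  have hupper : ((hessenberg p (m + 1)).submatrix Fin.succ Fin.castSucc).IsUpperTriangular := by
    intro i j hji
    have hlt : (j : ℕ) < i := hji
    simp only [submatrix_apply, hessenberg, of_apply, Fin.val_succ, Fin.val_castSucc]
    rw [if_neg (by omega), if_neg (by omega)]
  rw [det_of_isUpperTriangular hupper]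
  simp [hessenberg]

theorem det_hessenberg_updateRow_zero_single_last (p : ℕ → ℕ → R) (m : ℕ) (c : R) :
    ((hessenberg p (m + 1)).updateRow 0 (Pi.single (Fin.last m) c)).det = c := by
  rw [det_succ_row_zero, sum_eq_single (Fin.last m)]
  · have hminor : ((hessenberg p (m + 1)).updateRow 0 (Pi.single (Fin.last m) c)).submatrix
        Fin.succ (Fin.last m).succAbove =
          (hessenberg p (m + 1)).submatrix Fin.succ Fin.castSucc := by
      ext i j
      simp [Fin.succAbove_last]
    rw [hminor, det_hessenberg_submatrix_succ_castSucc]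
    rw [updateRow_self, Pi.single_eq_same, Fin.val_last, mul_right_comm, ← mul_pow]
    simp
  · intro j _ hj
    simp [Pi.single_eq_of_ne hj]
  · simp

end

/-- Theorem 1: for a sequence defined by `a_{n+1} = ∑_{i=1}^n p_{i,n} a_i` in a
commutative ring, `a_{n+1} = a_1 · det A_n` where `A_n` is the upper Hessenberg
matrix with entries `p_{i,j}` for `i ≤ j` and `-1` on the subdiagonal. -/
theorem hessenberg_det_of_recurrence {R : Type*} [CommRing R]
    (a : ℕ → R) (p : ℕ → ℕ → R)
    (ha : ∀ n, 1 ≤ n → a (n + 1) = ∑ i ∈ Finset.Icc 1 n, p i n * a i)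
    (A : (n : ℕ) → Matrix (Fin n) (Fin n) R)
    (hA : ∀ n (i j : Fin n), A n i j =
      if (i : ℕ) ≤ (j : ℕ) then p ((i : ℕ) + 1) ((j : ℕ) + 1)
      else if (i : ℕ) = (j : ℕ) + 1 then -1 else 0) :
    ∀ n, 1 ≤ n → a (n + 1) = a 1 * (A n).det := by
  intro n hn
  obtain ⟨m, rfl⟩ : ∃ m, n = m + 1 := ⟨n - 1, by omega⟩
  have hAm : A (m + 1) = hessenberg p (m + 1) := Matrix.ext (hA (m + 1))
  have hcramer := (hessenberg p (m + 1)).det_mul_eq_det_updateRow_of_vecMul_eq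
    (vecMul_hessenberg_eq_single ha m) 0
  rw [det_hessenberg_updateRow_zero_single_last] at hcramer
  rw [hAm, ← hcramer, mul_comm, Fin.val_zero]
end

section
/- Let $F_n$ be the $n \times n$ tridiagonal matrix with $1$ on the main diagonal and superdiagonal and $-1$ on the subdiagonal. For indices $1 \le i_1 < i_2 < \cdots < i_k \le n$, the principal minor of $F_n$ obtained by deleting rows and columns $i_1, \ldots, i_k$ equals $f_{i_1} \cdot f_{i_2 - i_1} \cdots f_{i_k - i_{k-1}} \cdot f_{n - i_k + 1}$. -/
def Tn (i j : ℕ) : ℤ :=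
  if i = j then 1 else if j = i + 1 then 1 else if i = j + 1 then -1 else 0
lemma Tn_add (c i j : ℕ) : Tn (i + c) (j + c) = Tn i j := by
  unfold Tn; split_ifs <;> omega
lemma Tn_far {i j : ℕ} (h : i + 2 ≤ j ∨ j + 2 ≤ i) : Tn i j = 0 := by
  unfold Tn; split_ifs <;> omega
def Md (n : ℕ) : Matrix (Fin n) (Fin n) ℤ := Matrix.of fun i j => Tn i j

lemma succAbove_one_val (m : ℕ) (j : Fin (m+1)) :
    (((1 : Fin (m+2)).succAbove j) : ℕ) = if (j:ℕ) < 1 then (j:ℕ) else (j:ℕ)+1 := by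
  rcases Nat.lt_or_ge (j:ℕ) 1 with h | h
  · rw [Fin.succAbove_of_castSucc_lt, if_pos h]
    · rfl
    · rw [Fin.lt_def]; simpa using h
  · rw [Fin.succAbove_of_le_castSucc, if_neg (by omega)]
    · rfl
    · rw [Fin.le_def]; simpa using h

lemma detMd : ∀ n, (Md n).det = Nat.fib (n + 1) := by
  intro n
  induction n using Nat.strong_induction_on with
  | _ n ih =>
    match n with
    | 0 => simp [Md]
    | 1 => simp [Md, Matrix.det_fin_one, Tn]
    | (m+2) =>
      have h1 : (Md (m+2)).submatrix Fin.succ (Fin.succAbove 0) = Md (m+1) := by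
        ext i j
        simp only [Matrix.submatrix_apply, Fin.succAbove_zero, Md, Matrix.of_apply, Fin.val_succ]
        exact Tn_add 1 i j
      have hB : ∀ i j : Fin (m+1), ((Md (m+2)).submatrix Fin.succ (Fin.succ 0).succAbove) i j
          = Tn ((i:ℕ)+1) (if (j:ℕ) < 1 then (j:ℕ) else (j:ℕ)+1) := by
        intro i j
        simp only [Matrix.submatrix_apply, Md, Matrix.of_apply, Fin.val_succ, Fin.succ_zero_eq_one]
        rw [succAbove_one_val]
      have h2 : ((Md (m+2)).submatrix Fin.succ (Fin.succ 0).succAbove).det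
          = -(Nat.fib (m+1) : ℤ) := by
        rw [Matrix.det_succ_column_zero, Fin.sum_univ_succ]
        have hz : ∀ i : Fin m,
            ((Md (m+2)).submatrix Fin.succ (Fin.succ 0).succAbove) i.succ 0 = 0 := by
          intro i
          rw [hB]
          simp only [Fin.val_succ, Fin.val_zero, Nat.zero_lt_one, if_true]
          exact Tn_far (by omega)
        rw [Finset.sum_eq_zero (fun i _ => by rw [hz]; ring), add_zero]
        have h00 : ((Md (m+2)).submatrix Fin.succ (Fin.succ 0).succAbove) 0 0 = -1 := by
          rw [hB]; norm_num [Tn]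
        have hsub : (((Md (m+2)).submatrix Fin.succ (Fin.succ 0).succAbove).submatrix
            (Fin.succAbove 0) Fin.succ) = Md m := by
          ext i j
          rw [Matrix.submatrix_apply, Fin.succAbove_zero, hB]
          simp only [Fin.val_succ, Md, Matrix.of_apply]
          rw [if_neg (by omega)]
          have := Tn_add 2 (i:ℕ) (j:ℕ)
          simpa [Nat.add_comm, Nat.add_assoc, Nat.add_left_comm] using this
        rw [h00, hsub, ih m (by omega)]
        norm_num
      rw [Matrix.det_succ_row_zero, Fin.sum_univ_succ, Fin.sum_univ_succ]
      have hz2 : ∀ i : Fin m, Md (m+2) 0 i.succ.succ = 0 := by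
        intro i
        simp only [Md, Matrix.of_apply]
        exact Tn_far (by simp [Fin.val_succ])
      rw [Finset.sum_eq_zero (fun i _ => by rw [hz2]; ring), add_zero, h1, h2,
        ih (m+1) (by omega)]
      have e1 : Md (m+2) 0 0 = 1 := by norm_num [Md, Tn]
      have e2 : Md (m+2) 0 (Fin.succ 0) = 1 := by norm_num [Md, Tn]
      rw [e1, e2]
      simp [Nat.fib_add_two]
      push_cast; ring

lemma det_split (n : ℕ) (L : Fin n) (P : Finset (Fin (L:ℕ))) (S : Finset (Fin n))
    (h : ∀ x : Fin n, x ∈ S ↔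
      (∃ hx : (x:ℕ) < (L:ℕ), (⟨(x:ℕ), hx⟩ : Fin (L:ℕ)) ∈ P) ∨ (L:ℕ) < (x:ℕ)) :
    ((Md n).submatrix (fun x : S => (x:Fin n)) (fun x : S => (x:Fin n))).det
      = ((Md (L:ℕ)).submatrix (fun x : P => (x:Fin (L:ℕ))) (fun x : P => (x:Fin (L:ℕ)))).det
        * (Nat.fib (n - (L:ℕ)) : ℤ) := by
  classical
  have hLn : (L:ℕ) < n := L.isLt
  set m₂ := n - (L:ℕ) - 1 with hm₂
  let f : ({x // x ∈ P} ⊕ Fin m₂) → {x // x ∈ S} := fun z =>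
    match z with
    | Sum.inl x => ⟨⟨((x:Fin (L:ℕ)):ℕ), lt_trans (x:Fin (L:ℕ)).isLt hLn⟩,
        (h _).mpr (Or.inl ⟨(x:Fin (L:ℕ)).isLt, by simpa using x.2⟩)⟩
    | Sum.inr j => ⟨⟨(L:ℕ)+1+(j:ℕ), by omega⟩,
        (h _).mpr (Or.inr (by simp only [Fin.val_mk]; omega))⟩
  have hf : Function.Bijective f := by
    constructor
    · intro z w hzw
      have hv : ((f z : Fin n) : ℕ) = ((f w : Fin n) : ℕ) := by rw [hzw]
      rcases z with x | p <;> rcases w with y | q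
      · simp only [f] at hv
        exact congrArg Sum.inl (Subtype.ext (Fin.ext hv))
      · exfalso
        simp only [f] at hv
        have := (x:Fin (L:ℕ)).isLt
        omega
      · exfalso
        simp only [f] at hv
        have := (y:Fin (L:ℕ)).isLt
        omega
      · simp only [f] at hv
        exact congrArg Sum.inr (Fin.ext (by omega))
    · intro y
      rcases (h y.1).mp y.2 with ⟨hx, hP⟩ | hgt
      · exact ⟨Sum.inl ⟨⟨(y:ℕ), hx⟩, hP⟩, Subtype.ext (Fin.ext rfl)⟩
      · have hy : ((y : Fin n) : ℕ) < n := (y : Fin n).isLt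
        exact ⟨Sum.inr ⟨((y:Fin n):ℕ) - (L:ℕ) - 1, by omega⟩,
          Subtype.ext (Fin.ext (by simp only [f]; omega))⟩
  let e := Equiv.ofBijective f hf
  have hdet := Matrix.det_submatrix_equiv_self e
    ((Md n).submatrix (fun x : S => (x:Fin n)) (fun x : S => (x:Fin n)))
  rw [← hdet, Matrix.submatrix_submatrix]
  have hblocks : ((Md n).submatrix ((fun x : S => (x:Fin n)) ∘ e) ((fun x : S => (x:Fin n)) ∘ e))
      = Matrix.fromBlocks
          ((Md (L:ℕ)).submatrix (fun x : P => (x:Fin (L:ℕ))) (fun x : P => (x:Fin (L:ℕ))))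
          0 0 (Md m₂) := by
    ext i j
    rcases i with x | p <;> rcases j with y | q <;>
      simp only [Matrix.submatrix_apply, Function.comp_apply, Matrix.fromBlocks_apply₁₁,
        Matrix.fromBlocks_apply₁₂, Matrix.fromBlocks_apply₂₁, Matrix.fromBlocks_apply₂₂,
        e, Equiv.ofBijective_apply, f, Md, Matrix.of_apply, Matrix.zero_apply]
    · exact Tn_far (by have := (x:Fin (L:ℕ)).isLt; omega)
    · exact Tn_far (by have := (y:Fin (L:ℕ)).isLt; omega)
    · have := Tn_add ((L:ℕ)+1) (p:ℕ) (q:ℕ)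
      simpa [Nat.add_comm, Nat.add_assoc, Nat.add_left_comm] using this
  rw [hblocks, Matrix.det_fromBlocks_zero₂₁, detMd]
  have hfib : m₂ + 1 = n - (L:ℕ) := by omega
  rw [hfib]

lemma aux : ∀ (k : ℕ) (n : ℕ) (a : Fin (k+1) → Fin n), StrictMono a →
    ((Md n).submatrix
        (fun x : ((Finset.univ.image a)ᶜ : Finset (Fin n)) => (x : Fin n))
        (fun x : ((Finset.univ.image a)ᶜ : Finset (Fin n)) => (x : Fin n))).det =
      (Nat.fib ((a 0 : ℕ) + 1) : ℤ) *
        (∏ t : Fin k, (Nat.fib ((a t.succ : ℕ) - (a t.castSucc : ℕ)) : ℤ)) *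
        (Nat.fib (n - (a (Fin.last k) : ℕ)) : ℤ) := by
  intro k
  induction k with
  | zero =>
    intro n a ha
    have h : ∀ x : Fin n, x ∈ (Finset.univ.image a)ᶜ ↔
        (∃ hx : (x:ℕ) < ((a 0 : Fin n):ℕ), (⟨(x:ℕ), hx⟩ : Fin ((a 0 : Fin n):ℕ)) ∈
          (Finset.univ : Finset (Fin ((a 0 : Fin n):ℕ)))) ∨ ((a 0 : Fin n):ℕ) < (x:ℕ) := by
      intro x
      rw [Finset.mem_compl]
      constructor
      · intro hx
        rcases lt_trichotomy (x:ℕ) ((a 0 : Fin n):ℕ) with hlt | heq | hgt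
        · exact Or.inl ⟨hlt, Finset.mem_univ _⟩
        · exact absurd (Finset.mem_image.mpr ⟨0, Finset.mem_univ _, Fin.ext heq.symm⟩) hx
        · exact Or.inr hgt
      · rintro (⟨hlt, -⟩ | hgt) <;>
        · intro hmem
          rcases Finset.mem_image.mp hmem with ⟨t, -, ht⟩
          have ht0 : t = 0 := Fin.ext (by omega)
          subst ht0
          have := congrArg Fin.val ht
          omega
    rw [det_split n (a 0) Finset.univ _ h]
    let e : Fin ((a 0 : Fin n):ℕ) ≃ {x // x ∈ (Finset.univ : Finset (Fin ((a 0 : Fin n):ℕ)))} :=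
      (Equiv.subtypeUnivEquiv (fun x => Finset.mem_univ x)).symm
    have hdet := Matrix.det_submatrix_equiv_self e
      ((Md ((a 0 : Fin n):ℕ)).submatrix
        (fun x : (Finset.univ : Finset (Fin ((a 0 : Fin n):ℕ))) => (x : Fin ((a 0 : Fin n):ℕ)))
        (fun x => (x : Fin ((a 0 : Fin n):ℕ))))
    rw [← hdet, Matrix.submatrix_submatrix]
    have hce : ((fun x : (Finset.univ : Finset (Fin ((a 0 : Fin n):ℕ))) =>
        (x : Fin ((a 0 : Fin n):ℕ))) ∘ e) = id := by
      funext x; rfl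
    rw [hce, Matrix.submatrix_id_id, detMd]
    have hlast : (Fin.last 0) = (0 : Fin 1) := rfl
    simp [hlast]
  | succ k ih =>
    intro n a ha
    set L : Fin n := a (Fin.last (k+1)) with hL
    have hcs : ∀ t : Fin (k+1), ((a t.castSucc : Fin n):ℕ) < (L:ℕ) :=
      fun t => ha (Fin.castSucc_lt_last t)
    set a' : Fin (k+1) → Fin (L:ℕ) := fun t => ⟨((a t.castSucc : Fin n):ℕ), hcs t⟩ with ha'def
    have ha' : StrictMono a' := by
      intro s t hst
      have : a s.castSucc < a t.castSucc := ha (Fin.castSucc_lt_castSucc_iff.mpr hst)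
      exact this
    have h : ∀ x : Fin n, x ∈ (Finset.univ.image a)ᶜ ↔
        (∃ hx : (x:ℕ) < (L:ℕ), (⟨(x:ℕ), hx⟩ : Fin (L:ℕ)) ∈ (Finset.univ.image a')ᶜ)
          ∨ (L:ℕ) < (x:ℕ) := by
      intro x
      rw [Finset.mem_compl]
      constructor
      · intro hx
        rcases lt_trichotomy (x:ℕ) ((L:ℕ)) with hlt | heq | hgt
        · refine Or.inl ⟨hlt, ?_⟩
          rw [Finset.mem_compl]
          intro hmem
          rcases Finset.mem_image.mp hmem with ⟨t, -, ht⟩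
          apply hx
          refine Finset.mem_image.mpr ⟨t.castSucc, Finset.mem_univ _, Fin.ext ?_⟩
          simpa using congrArg Fin.val ht
        · exact absurd (Finset.mem_image.mpr
            ⟨Fin.last _, Finset.mem_univ _, Fin.ext heq.symm⟩) hx
        · exact Or.inr hgt
      · rintro (⟨hlt, hP⟩ | hgt) <;> intro hmem <;>
          rcases Finset.mem_image.mp hmem with ⟨t, -, ht⟩
        · rcases Fin.eq_castSucc_or_eq_last t with ⟨t', rfl⟩ | rfl
          · apply Finset.mem_compl.mp hP
            exact Finset.mem_image.mpr ⟨t', Finset.mem_univ _,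
              Fin.ext (by simpa using congrArg Fin.val ht)⟩
          · have := congrArg Fin.val ht
            omega
        · have h1 : ((a t : Fin n):ℕ) ≤ (L:ℕ) := by
            have := ha.monotone (Fin.le_last t)
            exact this
          have := congrArg Fin.val ht
          omega
    rw [det_split n L _ _ h, ih (L:ℕ) a' ha']
    have hv : ∀ t : Fin (k+1), ((a' t : Fin (L:ℕ)):ℕ) = ((a t.castSucc : Fin n):ℕ) :=
      fun t => rfl
    simp only [hv]
    rw [Fin.prod_univ_castSucc]
    simp only [Fin.succ_castSucc, Fin.succ_last, Fin.castSucc_zero]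
    push_cast
    ring

/-- The principal minor of the tridiagonal Fibonacci matrix `F_n` obtained by
deleting rows and columns with (1-based) indices `i_1 < ⋯ < i_k` (here `k + 1`
indices given by the strictly monotone map `a`, with `i_t = a t + 1`) equals
`f_{i_1} · f_{i_2 - i_1} ⋯ f_{i_k - i_{k-1}} · f_{n - i_k + 1}`. -/
theorem principal_minor_tridiagonal_fib (n k : ℕ)
    (F : Matrix (Fin n) (Fin n) ℤ)
    (hF : ∀ i j : Fin n, F i j =
      if (i : ℕ) = (j : ℕ) then 1
      else if (j : ℕ) = (i : ℕ) + 1 then 1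
      else if (i : ℕ) = (j : ℕ) + 1 then -1 else 0)
    (a : Fin (k + 1) → Fin n) (ha : StrictMono a) :
    (F.submatrix
        (fun x : ((Finset.univ.image a)ᶜ : Finset (Fin n)) => (x : Fin n))
        (fun x : ((Finset.univ.image a)ᶜ : Finset (Fin n)) => (x : Fin n))).det =
      (Nat.fib ((a 0 : ℕ) + 1) : ℤ) *
        (∏ t : Fin k, (Nat.fib ((a t.succ : ℕ) - (a t.castSucc : ℕ)) : ℤ)) *
        (Nat.fib (n - (a (Fin.last k) : ℕ)) : ℤ) := by
  have hFM : F = Md n := by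
    ext i j
    rw [hF i j]
    rfl
  rw [hFM]
  exact aux k n a ha
end

section
/- Let $F_n$ be the $n \times n$ tridiagonal matrix with $1$ on the main diagonal and superdiagonal and $-1$ on the subdiagonal. For $0 \le k \le n-1$, the sum $S_{n-k}$ of all principal minors of order $n-k$ of $F_n$ equals $\sum_{j_1 + j_2 + \cdots + j_{k+1} = n-k} f_{j_1+1} f_{j_2+1} \cdots f_{j_{k+1}+1}$, where the sum is over all $(k+1)$-tuples of nonnegative integers $j_1, \ldots, j_{k+1}$ summing to $n-k$. -/
/-!
The sum of the principal `m`-minors of `F_n` is the coefficient of `X ^ m` in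
`E_n = det (1 + X • F_n)`, and expanding along the first row gives the continuant recurrence
`E_{n+2} = (1 + X) E_{n+1} + X ^ 2 E_n`. The convolved Fibonacci numbers `c r m` are the
coefficients of `G ^ r`, where `G = ∑ f_{j+1} y ^ j = 1 / (1 - y - y ^ 2)`; since
`G ^ (r + 1) (1 - y - y ^ 2) = G ^ r`, they satisfy
`c (r + 1) (m + 2) = c r (m + 2) + c (r + 1) (m + 1) + c (r + 1) m`, which is exactly the
recurrence for `c (n + 1 - m) m` forced by the one for `E_n`.
-/

namespace Matrix

variable {R : Type*}

def tridiag [Zero R] (n : ℕ) (a b c : R) : Matrix (Fin n) (Fin n) R :=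
  of fun i j => if (i : ℕ) = j then a else if (j : ℕ) = i + 1 then b
    else if (i : ℕ) = j + 1 then c else 0

@[simp] lemma tridiag_submatrix_succ [Zero R] (n : ℕ) (a b c : R) :
    (tridiag (n + 1) a b c).submatrix Fin.succ Fin.succ = tridiag n a b c := by
  ext i j; simp [tridiag]

lemma det_tridiag_succ_succ [CommRing R] (n : ℕ) (a b c : R) :
    (tridiag (n + 2) a b c).det =
      a * (tridiag (n + 1) a b c).det - b * c * (tridiag n a b c).det := by
  set T := tridiag (n + 2) a b c
  -- The `(0, 1)`-minor has `c` as the only nonzero entry of its first column.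
  have hminor : (T.submatrix Fin.succ (Fin.succAbove 1)).det = c * (tridiag n a b c).det := by
    have hcol (i : Fin n) : T i.succ.succ 0 = 0 := by simp [T, tridiag]
    have h10 : T 1 0 = c := by simp [T, tridiag]
    have hrest : (T.submatrix Fin.succ (Fin.succAbove 1)).submatrix Fin.succ Fin.succ =
        tridiag n a b c := by
      ext i j
      simp [T, tridiag]
    rw [det_succ_column_zero, Fin.sum_univ_succ]
    simp [hcol, hrest, h10]
  have hrow (j : Fin n) : T 0 j.succ.succ = 0 := by simp [T, tridiag]
  have h00 : T 0 0 = a := by simp [T, tridiag]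
  have h01 : T 0 1 = b := by simp [T, tridiag]
  rw [det_succ_row_zero, Fin.sum_univ_succ, Fin.sum_univ_succ]
  simp [hrow, hminor, h00, h01, T]
  ring

lemma one_add_smul_map_tridiag {S : Type*} [Semiring R] [Semiring S] (f : R →+* S) (r : S)
    (n : ℕ) (a b c : R) :
    1 + r • (tridiag n a b c).map f = tridiag n (1 + r * f a) (r * f b) (r * f c) := by
  ext i j
  simp only [tridiag, add_apply, one_apply, smul_apply, map_apply, of_apply, smul_eq_mul]
  split_ifs <;> simp_all [Fin.ext_iff]

end Matrix

theorem Finset.Nat.sum_antidiagonalTuple_succ {M : Type*} [AddCommMonoid M] (k n : ℕ)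
    (f : (Fin (k + 1) → ℕ) → M) :
    ∑ x ∈ Nat.antidiagonalTuple (k + 1) n, f x =
      ∑ p ∈ antidiagonal n, ∑ x ∈ Nat.antidiagonalTuple k p.2, f (Fin.cons p.1 x) := by
  simp only [Finset.sum_eq_multiset_sum]
  change (Multiset.map f (Multiset.ofList (List.Nat.antidiagonalTuple (k + 1) n))).sum =
    (Multiset.map _ (Multiset.ofList (List.Nat.antidiagonal n))).sum
  simp [List.Nat.antidiagonalTuple, List.flatMap_def, List.sum_flatten,
    Nat.antidiagonalTuple, Multiset.Nat.antidiagonalTuple, Function.comp_def]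

open Finset Polynomial Nat

def convolvedFib (r m : ℕ) : ℤ :=
  ∑ j ∈ Finset.Nat.antidiagonalTuple r m, ∏ s, (fib (j s + 1) : ℤ)

lemma convolvedFib_zero_succ (m : ℕ) : convolvedFib 0 (m + 1) = 0 := by
  simp [convolvedFib]

lemma convolvedFib_zero_right (r : ℕ) : convolvedFib r 0 = 1 := by
  simp [convolvedFib, Finset.Nat.antidiagonalTuple_zero_right]

lemma convolvedFib_succ (r m : ℕ) :
    convolvedFib (r + 1) m = ∑ p ∈ antidiagonal m, fib (p.1 + 1) * convolvedFib r p.2 := by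
  simp [convolvedFib, Finset.Nat.sum_antidiagonalTuple_succ, Fin.prod_univ_succ, mul_sum]

lemma convolvedFib_succ_one (r : ℕ) : convolvedFib (r + 1) 1 = convolvedFib r 1 + 1 := by
  simp [convolvedFib_succ, sum_antidiagonal_succ, convolvedFib_zero_right]

lemma convolvedFib_succ_add_two (r m : ℕ) :
    convolvedFib (r + 1) (m + 2) =
      convolvedFib r (m + 2) + convolvedFib (r + 1) (m + 1) + convolvedFib (r + 1) m := by
  simp only [convolvedFib_succ r, sum_antidiagonal_succ, fib_add_two, Nat.cast_add, add_mul,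
    sum_add_distrib, zero_add, fib_one, fib_zero, Nat.cast_one, Nat.cast_zero, one_mul, zero_mul]
  ring

/-- `det (1 + X • F_n)`, whose coefficients are the sums of principal minors of `F_n` by
`Matrix.coeff_det_one_add_X_smul_eq_sum_minors`. -/
noncomputable def fibMinorPoly (n : ℕ) : ℤ[X] := (Matrix.tridiag n (1 + X) X (-X)).det

lemma fibMinorPoly_zero : fibMinorPoly 0 = 1 := Matrix.det_isEmpty

lemma fibMinorPoly_one : fibMinorPoly 1 = 1 + X := by
  simp [fibMinorPoly, Matrix.tridiag]

lemma fibMinorPoly_add_two (n : ℕ) :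
    fibMinorPoly (n + 2) = (1 + X) * fibMinorPoly (n + 1) + X ^ 2 * fibMinorPoly n := by
  simp only [fibMinorPoly, Matrix.det_tridiag_succ_succ]
  ring

/-- For `m > n` both sides vanish: `n + 1 - m` truncates to `0`. -/
lemma coeff_fibMinorPoly : ∀ n m, (fibMinorPoly n).coeff m = convolvedFib (n + 1 - m) m
  | 0, 0 => by simp [fibMinorPoly_zero, convolvedFib_zero_right]
  | 0, m + 1 => by simp [fibMinorPoly_zero, convolvedFib_zero_succ, coeff_one]
  | 1, 0 => by simp [fibMinorPoly_one, convolvedFib_zero_right]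
  | 1, 1 => by simp [fibMinorPoly_one, coeff_one, convolvedFib_succ_one, convolvedFib_zero_succ]
  | 1, m + 2 => by simp [fibMinorPoly_one, coeff_one, coeff_X, convolvedFib_zero_succ]
  | n + 2, 0 => by
    simp [fibMinorPoly_add_two, convolvedFib_zero_right, coeff_fibMinorPoly (n + 1) 0]
  | n + 2, 1 => by
    simp [fibMinorPoly_add_two, add_mul, coeff_X_pow_mul', convolvedFib_succ_one,
      convolvedFib_zero_right, coeff_fibMinorPoly (n + 1) 0, coeff_fibMinorPoly (n + 1) 1]
  | n + 2, m + 2 => by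
    have hrec : (fibMinorPoly (n + 2)).coeff (m + 2) = (fibMinorPoly (n + 1)).coeff (m + 2) +
        (fibMinorPoly (n + 1)).coeff (m + 1) + (fibMinorPoly n).coeff m := by
      simp [fibMinorPoly_add_two, add_mul, coeff_X_pow_mul']
    rw [hrec, coeff_fibMinorPoly (n + 1), coeff_fibMinorPoly (n + 1), coeff_fibMinorPoly n]
    rcases le_or_gt m n with h | h
    · rw [show n + 2 + 1 - (m + 2) = n - m + 1 by omega, show n + 1 + 1 - (m + 2) = n - m by omega,
        show n + 1 + 1 - (m + 1) = n - m + 1 by omega, show n + 1 - m = n - m + 1 by omega,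
        convolvedFib_succ_add_two]
    · rw [Nat.sub_eq_zero_of_le (by omega : n + 2 + 1 ≤ m + 2),
        Nat.sub_eq_zero_of_le (by omega : n + 1 + 1 ≤ m + 2),
        Nat.sub_eq_zero_of_le (by omega : n + 1 + 1 ≤ m + 1),
        Nat.sub_eq_zero_of_le (by omega : n + 1 ≤ m)]
      obtain ⟨m, rfl⟩ : ∃ m', m = m' + 1 := ⟨m - 1, by omega⟩
      simp only [convolvedFib_zero_succ, add_zero]

theorem sum_principal_minors_tridiagonal_fib_general (n k : ℕ) (hk : k ≤ n - 1)
    (F : Matrix (Fin n) (Fin n) ℤ)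
    (hF : ∀ i j : Fin n, F i j =
      if (i : ℕ) = (j : ℕ) then 1
      else if (j : ℕ) = (i : ℕ) + 1 then 1
      else if (i : ℕ) = (j : ℕ) + 1 then -1 else 0) :
    ∑ t ∈ Finset.powersetCard (n - k) (Finset.univ : Finset (Fin n)),
        (F.submatrix (fun x : t => (x : Fin n)) (fun x : t => (x : Fin n))).det =
      ∑ j ∈ Finset.Nat.antidiagonalTuple (k + 1) (n - k),
        ∏ s : Fin (k + 1), (Nat.fib (j s + 1) : ℤ) := by
  have hF' : F = Matrix.tridiag n 1 1 (-1) := Matrix.ext hF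
  have hpoly : 1 + (X : ℤ[X]) • F.map C = Matrix.tridiag n (1 + X) X (-X) := by
    rw [hF', Matrix.one_add_smul_map_tridiag]
    simp
  rw [← Matrix.coeff_det_one_add_X_smul_eq_sum_minors, hpoly, ← fibMinorPoly, coeff_fibMinorPoly,
    show n + 1 - (n - k) = k + 1 by omega]
  rfl

/-- The sum of all principal minors of order `n - k` of the tridiagonal
Fibonacci matrix `F_n` is the convolved Fibonacci number
`∑_{j_1 + ⋯ + j_{k+1} = n - k} f_{j_1+1} ⋯ f_{j_{k+1}+1}`. -/
theorem sum_principal_minors_tridiagonal_fib (n k : ℕ) (hk : k ≤ n - 1) (hn : 1 ≤ n)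
    (F : Matrix (Fin n) (Fin n) ℤ)
    (hF : ∀ i j : Fin n, F i j =
      if (i : ℕ) = (j : ℕ) then 1
      else if (j : ℕ) = (i : ℕ) + 1 then 1
      else if (i : ℕ) = (j : ℕ) + 1 then -1 else 0) :
    ∑ t ∈ Finset.powersetCard (n - k) (Finset.univ : Finset (Fin n)),
        (F.submatrix (fun x : t => (x : Fin n)) (fun x : t => (x : Fin n))).det =
      ∑ j ∈ Finset.Nat.antidiagonalTuple (k + 1) (n - k),
        ∏ s : Fin (k + 1), (Nat.fib (j s + 1) : ℤ) :=
  sum_principal_minors_tridiagonal_fib_general n k hk F hF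
end

section
/- Let $f_{n}(x)$ denote the Fibonacci polynomials, defined by $f_1(x) = 1$, $f_2(x) = x$, $f_{n+1}(x) = x f_n(x) + f_{n-1}(x)$. Then $f_{n+1}(x-1) = \sum_{k=0}^n (-1)^{n-k} f^{(k+1)}_{n-k+1} x^k$, where $f^{(k+1)}_{n-k+1} = \sum_{j_1 + \cdots + j_{k+1} = n-k,\ j_t \ge 0} f_{j_1+1} \cdots f_{j_{k+1}+1}$ are the convolved Fibonacci numbers. -/
/-!
Since `∑ₙ f_{n+1}(x) tⁿ = 1 / (1 - x t - t²)`, the polynomial `f_{n+1}(x - 1)` is the coefficient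
of `tⁿ` in `1 / (D(t) - x t)` with `D(t) = 1 + t - t²`. Now `1 / D(t) = φ(-t)`, where
`φ(t) = ∑ⱼ f_{j+1} tʲ`, and expanding
`1 / (D - x t) = ∑ₖ xᵏ tᵏ / D^(k+1) = ∑ₖ xᵏ tᵏ φ(-t)^(k+1)`
shows that the coefficient of `xᵏ` is `(-1)^(n-k)` times the coefficient of `t^(n-k)` in
`φ^(k+1)`, which is the convolved Fibonacci number.
-/

open Finset

namespace PowerSeries

theorem coeff_pow_eq_sum_antidiagonalTuple {R : Type*} [CommSemiring R] (φ : R⟦X⟧) (k n : ℕ) :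
    coeff n (φ ^ k) = ∑ j ∈ Nat.antidiagonalTuple k n, ∏ i : Fin k, coeff (j i) φ := by
  rw [← Fin.prod_const, coeff_prod, finsuppAntidiag, sum_map,
    ← piAntidiag_univ_fin_eq_antidiagonalTuple]
  exact sum_attach (piAntidiag univ n) fun j => ∏ i, coeff (j i) φ

theorem mk_mul_eq_one_of_recurrence {R : Type*} [CommRing R] {u : ℕ → R} {a : R}
    (h0 : u 0 = 1) (h1 : u 1 = a) (hu : ∀ n, u (n + 2) = a * u (n + 1) + u n) :
    mk u * (1 - C a * X - X ^ 2) = 1 := by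
  have : mk u * (1 - C a * X - X ^ 2) = mk u - C a * (X * mk u) - X * (X * mk u) := by ring
  ext (_ | _ | n)
  · simp [this, h0]
  · simp [this, coeff_succ_X_mul, h0, h1]
  · simp [this, coeff_succ_X_mul, hu]

theorem mk_fib_mul_eq_one (R : Type*) [CommRing R] :
    mk (fun j => (Nat.fib (j + 1) : R)) * (1 - X - X ^ 2) = 1 := by
  simpa using mk_mul_eq_one_of_recurrence (u := fun j => (Nat.fib (j + 1) : R)) (a := 1)
    (by simp) (by simp) (fun n => by push_cast [Nat.fib_add_two]; ring)

theorem mk_fibPoly_comp_mul_eq_one {R : Type*} [CommRing R] {F : ℕ → Polynomial R}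
    (h1 : F 1 = 1) (h2 : F 2 = Polynomial.X)
    (hrec : ∀ m : ℕ, F (m + 3) = Polynomial.X * F (m + 2) + F (m + 1)) (p : Polynomial R) :
    mk (fun n => (F (n + 1)).comp p) * (1 - C p * X - X ^ 2) = 1 :=
  mk_mul_eq_one_of_recurrence (by simp [h1]) (by simp [h2]) (fun n => by simp [hrec])

theorem coeff_eq_sum_pow_of_mul_sub_C_mul_X_eq_one {A : Type*} [CommRing A] {ψ Ψ D : A⟦X⟧}
    (a : A) (hψ : ψ * D = 1) (hΨ : Ψ * (D - C a * X) = 1) (n : ℕ) :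
    coeff n Ψ = ∑ k ∈ range (n + 1), a ^ k * coeff (n - k) (ψ ^ (k + 1)) := by
  have geom : (∑ k ∈ range (n + 1), (C a * X * ψ) ^ k * ψ) * (D - C a * X) =
      1 - (C a * X * ψ) ^ (n + 1) := by
    rw [← sum_mul, mul_assoc, ← geom_sum_mul_neg]
    linear_combination (∑ k ∈ range (n + 1), (C a * X * ψ) ^ k) * hψ
  have trunc : ∑ k ∈ range (n + 1), (C a * X * ψ) ^ k * ψ =
      Ψ - X ^ (n + 1) * ((C a * ψ) ^ (n + 1) * Ψ) := by
    linear_combination (-∑ k ∈ range (n + 1), (C a * X * ψ) ^ k * ψ) * hΨ + Ψ * geom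
  have := congrArg (coeff n) trunc
  rw [map_sub, coeff_X_pow_mul', if_neg (by omega), sub_zero, map_sum] at this
  rw [← this]
  refine sum_congr rfl fun k hk => ?_
  rw [show (C a * X * ψ) ^ k * ψ = X ^ k * (C (a ^ k) * ψ ^ (k + 1)) by rw [map_pow]; ring,
    coeff_X_pow_mul', if_pos (by simpa [Nat.lt_succ_iff] using hk), coeff_C_mul]

end PowerSeries

open PowerSeries

/-- The expansion of the Fibonacci polynomial `f_{n+1}(x - 1)` in powers of `x`
has the convolved Fibonacci numbers (up to sign) as coefficients. -/
theorem fibPoly_comp_sub_one_eq_convolved_fib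
    (F : ℕ → Polynomial ℤ) (h1 : F 1 = 1) (h2 : F 2 = Polynomial.X)
    (hrec : ∀ m : ℕ, F (m + 3) = Polynomial.X * F (m + 2) + F (m + 1))
    (n : ℕ) :
    (F (n + 1)).comp (Polynomial.X - 1) =
      ∑ k ∈ Finset.range (n + 1),
        Polynomial.C ((-1 : ℤ) ^ (n - k) *
            ∑ j ∈ Finset.Nat.antidiagonalTuple (k + 1) (n - k),
              ∏ t : Fin (k + 1), (Nat.fib (j t + 1) : ℤ)) *
          Polynomial.X ^ k := by
  have hψ : rescale (-1) (mk fun j => (Nat.fib (j + 1) : Polynomial ℤ)) * (1 + X - X ^ 2) = 1 := by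
    simpa [rescale_X] using congrArg (rescale (-1)) (mk_fib_mul_eq_one (Polynomial ℤ))
  have hΨ : (mk fun n => (F (n + 1)).comp (Polynomial.X - 1)) *
      (1 + X - X ^ 2 - C Polynomial.X * X) = 1 := by
    convert mk_fibPoly_comp_mul_eq_one h1 h2 hrec (Polynomial.X - 1) using 2
    rw [map_sub, map_one]
    ring
  rw [← coeff_mk n fun n => (F (n + 1)).comp (Polynomial.X - 1),
    coeff_eq_sum_pow_of_mul_sub_C_mul_X_eq_one Polynomial.X hψ hΨ n]
  refine sum_congr rfl fun k _ => ?_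
  rw [← map_pow, coeff_rescale, coeff_pow_eq_sum_antidiagonalTuple, mul_comm]
  simp
end

section
/- For all $n \ge 0$, the Fibonacci number $f_{n+1}$ satisfies $f_{n+1} = (-1)^n \sum_{k=0}^n \sum_{i=0}^{\lfloor (n-k)/2 \rfloor} (-2)^k \binom{n-i}{i} \binom{n-2i}{k}$. -/
/-!
Over the triangle `2 i + k ≤ n` the two sums can be swapped. The inner sum over `k` is then
`(1 - 2) ^ (n - 2 i)` by the binomial theorem, and its sign cancels `(-1) ^ n`. What remains is
the sum `∑ C(n - i, i)` along a shallow diagonal of Pascal's triangle, which is `f (n + 1)`.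
-/

open Finset

theorem Nat.fib_succ_eq_sum_range_choose (n : ℕ) :
    Nat.fib (n + 1) = ∑ i ∈ range (n / 2 + 1), (n - i).choose i := by
  rw [Nat.fib_succ_eq_sum_choose, ← Nat.sum_antidiagonal_swap]
  simp only [Prod.fst_swap, Prod.snd_swap]
  rw [Nat.sum_antidiagonal_eq_sum_range_succ (fun i j => j.choose i)]
  refine (sum_subset (range_subset_range.2 (by omega)) fun i hi hi' => ?_).symm
  simp only [mem_range] at hi hi'
  exact Nat.choose_eq_zero_of_lt (by omega)

theorem sum_range_pow_mul_choose {R : Type*} [CommSemiring R] (x : R) (m : ℕ) :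
    ∑ k ∈ range (m + 1), x ^ k * m.choose k = (x + 1) ^ m := by
  simp [add_pow]

/-- A binomial identity for Fibonacci numbers:
`f_{n+1} = (-1)^n ∑_{k=0}^n ∑_{i=0}^{⌊(n-k)/2⌋} (-2)^k C(n-i, i) C(n-2i, k)`. -/
theorem fib_eq_alternating_binomial_sum (n : ℕ) :
    (Nat.fib (n + 1) : ℤ) =
      (-1 : ℤ) ^ n *
        ∑ k ∈ Finset.range (n + 1),
          ∑ i ∈ Finset.range ((n - k) / 2 + 1),
            (-2 : ℤ) ^ k * (Nat.choose (n - i) i : ℤ) * (Nat.choose (n - 2 * i) k : ℤ) := by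
  rw [sum_comm' (t' := range (n / 2 + 1)) (s' := fun i => range (n - 2 * i + 1))
      (by intro k i; simp only [mem_range]; omega),
    Nat.fib_succ_eq_sum_range_choose, mul_sum]
  push_cast
  refine sum_congr rfl fun i hi => ?_
  have hsign : (-1 : ℤ) ^ n * (-1) ^ (n - 2 * i) = 1 := by
    rw [← pow_add]
    exact Even.neg_one_pow ⟨n - i, by rw [mem_range] at hi; omega⟩
  calc (((n - i).choose i : ℕ) : ℤ)
      = (-1) ^ n * (-1) ^ (n - 2 * i) * (n - i).choose i := by rw [hsign, one_mul]
    _ = (-1) ^ n * ((n - i).choose i * (-2 + 1) ^ (n - 2 * i)) := by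
        rw [show (-2 + 1 : ℤ) = -1 by norm_num]; ring
    _ = _ := by
        rw [← sum_range_pow_mul_choose, mul_sum]
        exact congrArg _ (sum_congr rfl fun k _ => by ring)
end

section
/- Let $F_n$ be the $n \times n$ tridiagonal matrix with $1$ on the main diagonal and superdiagonal and $-1$ on the subdiagonal. The cofactor $M(i,j)$ of the $(i,j)$ entry of $F_n$ equals $f_i \cdot f_{n-j+1}$ if $i \le j$, and $(-1)^{i+j} f_j \cdot f_{n-i+1}$ if $i > j$. -/
/-!
Let `A` be the candidate matrix of cofactors, transposed. Its columns are built from two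
solutions of the recurrence `x (p - 1) = x p + x (p + 1)` of the rows of `F`, namely
`(-1)^p f_{p+1}`, vanishing just above the matrix, and `f_{n-p+1}`, vanishing just below it.
Glued together at the diagonal they solve `F x = 0` except on the diagonal row, where the
defect is `f_{q+1} f_{n-q} + f_{q+2} f_{n-q+1} = f_{n+2}` by the addition formula. So
`F * A = f_{n+2} • 1`, and as Laplace expansion gives `det F = f_{n+2} ≠ 0`, `A` is the adjugate.
-/

open Matrix Finset

theorem Matrix.adjugate_eq_of_mul_eq_det_smul {ι R : Type*} [Fintype ι] [DecidableEq ι]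
    [CommRing R] [IsDomain R] {A B : Matrix ι ι R} (hA : A.det ≠ 0) (h : A * B = A.det • 1) :
    A.adjugate = B := by
  apply smul_right_injective (Matrix ι ι R) hA
  calc A.det • A.adjugate = A.adjugate * (A * B) := by rw [h, Matrix.mul_smul, Matrix.mul_one]
    _ = A.det • B := by rw [← Matrix.mul_assoc, adjugate_mul, smul_mul, Matrix.one_mul]

def tridiag {R : Type*} [Zero R] (a b c : R) (k : ℕ) : Matrix (Fin k) (Fin k) R :=
  of fun i j =>
    if (i : ℕ) = j then a else if (j : ℕ) = i + 1 then b else if (i : ℕ) = j + 1 then c else 0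

section Tridiag

variable {R : Type*} [CommRing R] (a b c : R)

lemma tridiag_apply (k : ℕ) (i j : Fin k) : tridiag a b c k i j =
    if (i : ℕ) = j then a else if (j : ℕ) = i + 1 then b else if (i : ℕ) = j + 1 then c else 0 :=
  rfl

@[simp]
lemma tridiag_submatrix_succ_succ (k : ℕ) :
    (tridiag a b c (k + 1)).submatrix Fin.succ Fin.succ = tridiag a b c k := by
  ext i j
  simp [tridiag_apply]

lemma det_tridiag_add_two (k : ℕ) :
    (tridiag a b c (k + 2)).det =
      a * (tridiag a b c (k + 1)).det - b * c * (tridiag a b c k).det := by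
  have hminor : ((tridiag a b c (k + 2)).submatrix Fin.succ (Fin.succAbove 1)).det =
      c * (tridiag a b c k).det := by
    rw [det_succ_column_zero, Fintype.sum_eq_single 0]
    · have hsub : ((tridiag a b c (k + 2)).submatrix Fin.succ (Fin.succAbove 1)).submatrix
          (Fin.succAbove 0) Fin.succ = tridiag a b c k := by
        ext i j
        simp [tridiag_apply]
      rw [hsub]
      simp [tridiag_apply]
    · intro i hi
      simp [tridiag_apply]
      omega
  rw [det_succ_row_zero, Fintype.sum_eq_add 0 1 zero_ne_one]
  · simp [tridiag_apply, hminor]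
    ring
  · rintro j ⟨hj₀, hj₁⟩
    have h₀ : (j : ℕ) ≠ 0 := Fin.val_ne_of_ne hj₀
    have h₁ : (j : ℕ) ≠ 1 := Fin.val_ne_of_ne hj₁
    have hentry : tridiag a b c (k + 2) 0 j = 0 := by
      rw [tridiag_apply, if_neg, if_neg, if_neg] <;> simp <;> omega
    rw [hentry, mul_zero, zero_mul]

lemma tridiag_mulVec_shift {k : ℕ} (x : ℕ → R) (hx₀ : x 0 = 0) (hxk : x (k + 1) = 0)
    (i : Fin k) :
    (tridiag a b c k *ᵥ fun p => x (p + 1)) i = c * x i + a * x (i + 1) + b * x (i + 2) := by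
  have hterm : ∀ p : ℕ, (if (i : ℕ) = p then a else if p = i + 1 then b
      else if (i : ℕ) = p + 1 then c else 0) * x (p + 1) =
      (if p + 1 = i then c * x i else 0) + (if p = i then a * x (i + 1) else 0) +
        (if p = i + 1 then b * x (i + 2) else 0) := by
    intro p
    split_ifs <;> first | omega | (subst_vars; ring1) | (rw [‹(i : ℕ) = p + 1›]; ring1)
  have hsub : (∑ p ∈ range k, if p + 1 = (i : ℕ) then c * x i else 0) = c * x i := by
    rcases h : (i : ℕ) with _ | m
    · simp [hx₀]
    · simp only [add_left_inj]
      rw [sum_ite_eq', if_pos (mem_range.2 (by omega))]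
  have hsup : (if (i : ℕ) + 1 ∈ range k then b * x (i + 2) else 0) = b * x (i + 2) := by
    rw [ite_eq_left_iff, mem_range]
    intro h
    rw [show (i : ℕ) + 2 = k + 1 by omega, hxk, mul_zero]
  simp only [mulVec, dotProduct, tridiag_apply]
  rw [Fin.sum_univ_eq_sum_range (fun p => (if (i : ℕ) = p then a else if p = i + 1 then b
      else if (i : ℕ) = p + 1 then c else 0) * x (p + 1)) k,
    Finset.sum_congr rfl fun p _ => hterm p, sum_add_distrib, sum_add_distrib, sum_ite_eq',
    sum_ite_eq', if_pos (mem_range.2 i.2), hsub, hsup]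

end Tridiag

abbrev fibTridiag (k : ℕ) : Matrix (Fin k) (Fin k) ℤ := tridiag 1 1 (-1) k

lemma det_fibTridiag (k : ℕ) : (fibTridiag k).det = Nat.fib (k + 1) := by
  induction k using Nat.twoStepInduction with
  | zero => simp
  | one => simp [tridiag_apply]
  | more k ih₀ ih₁ =>
    rw [det_tridiag_add_two, ih₀, ih₁, Nat.fib_add_two (n := k + 1)]
    push_cast
    ring

/-- Column `q` of the adjugate of `fibTridiag (n + 1)`: its entry in row `p` is
`fibGreen n q (p + 1)`, the shift leaving room for the zero boundary values at `0` and `n + 2`. -/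
def fibGreen (n q p : ℕ) : ℤ :=
  if q < p then Nat.fib (q + 1) * Nat.fib (n + 2 - p)
  else (-1) ^ (p + q + 1) * Nat.fib p * Nat.fib (n + 1 - q)

lemma fibGreen_zero (n q : ℕ) : fibGreen n q 0 = 0 := by
  simp [fibGreen]

lemma fibGreen_add_two_self {n q : ℕ} (hq : q ≤ n) : fibGreen n q (n + 2) = 0 := by
  simp [fibGreen, show q < n + 2 by omega]

lemma fibGreen_recurrence {n q i : ℕ} (hq : q ≤ n) (hi : i ≤ n) :
    fibGreen n q (i + 1) + fibGreen n q (i + 2) - fibGreen n q i =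
      if i = q then (Nat.fib (n + 2) : ℤ) else 0 := by
  unfold fibGreen
  rcases lt_trichotomy i q with hlt | rfl | hgt
  · rw [if_neg hlt.ne, if_neg (show ¬q < i + 1 by omega), if_neg (show ¬q < i by omega)]
    rcases (by omega : q = i + 1 ∨ i + 2 ≤ q) with rfl | hle
    · rw [if_pos (show i + 1 < i + 2 by omega), show n + 2 - (i + 2) = n + 1 - (i + 1) by omega,
        Odd.neg_one_pow ⟨i + 1, by ring⟩, Even.neg_one_pow ⟨i + 1, by ring⟩, Nat.fib_add_two]
      push_cast
      ring
    · rw [if_neg (show ¬q < i + 2 by omega), Nat.fib_add_two]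
      push_cast
      ring
  · obtain ⟨m, rfl⟩ : ∃ m, n = i + m := ⟨n - i, by omega⟩
    rw [if_pos rfl, if_pos (show i < i + 1 by omega), if_pos (show i < i + 2 by omega),
      if_neg (lt_irrefl i), Odd.neg_one_pow ⟨i, by ring⟩,
      show i + m + 2 - (i + 1) = m + 1 by omega, show i + m + 2 - (i + 2) = m by omega,
      show i + m + 1 - i = m + 1 by omega, show i + m + 2 = i + (m + 1) + 1 by omega,
      Nat.fib_add, Nat.fib_add_two (n := m)]
    push_cast
    ring
  · obtain ⟨m, rfl⟩ : ∃ m, n = i + m := ⟨n - i, by omega⟩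
    rw [if_neg hgt.ne', if_pos (show q < i + 1 by omega), if_pos (show q < i + 2 by omega),
      if_pos hgt, show i + m + 2 - (i + 1) = m + 1 by omega,
      show i + m + 2 - (i + 2) = m by omega, show i + m + 2 - i = m + 2 by omega,
      Nat.fib_add_two (n := m)]
    push_cast
    ring

lemma fibTridiag_mul_fibGreen (n : ℕ) :
    fibTridiag (n + 1) * of (fun p q : Fin (n + 1) => fibGreen n q (p + 1)) =
      (Nat.fib (n + 2) : ℤ) • 1 := by
  ext i q
  simp only [mul_apply', of_apply]
  rw [← mulVec, tridiag_mulVec_shift _ _ _ _ (fibGreen_zero n q)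
    (fibGreen_add_two_self (Nat.lt_succ_iff.1 q.2))]
  simp only [Matrix.smul_apply, one_apply, Fin.ext_iff, smul_eq_mul, mul_ite, mul_one, mul_zero]
  rw [← fibGreen_recurrence (Nat.lt_succ_iff.1 q.2) (Nat.lt_succ_iff.1 i.2)]
  ring

lemma adjugate_fibTridiag (n : ℕ) :
    (fibTridiag (n + 1)).adjugate =
      of fun p q : Fin (n + 1) => fibGreen n q (p + 1) := by
  have hdet := det_fibTridiag (n + 1)
  refine adjugate_eq_of_mul_eq_det_smul ?_ ?_
  · rw [hdet]
    exact_mod_cast (Nat.fib_pos.2 (by omega : 0 < n + 2)).ne'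
  · rw [hdet, fibTridiag_mul_fibGreen]

/-- Cofactors of the `(n+1) × (n+1)` tridiagonal Fibonacci matrix: the cofactor of
the entry in (1-based) row `i+1` and column `j+1` is `f_{i+1} · f_{n - j + 1}` if
`i ≤ j`, and `(-1)^{i+j} f_{j+1} · f_{n - i + 1}` if `i > j`. -/
theorem cofactor_tridiagonal_fib (n : ℕ)
    (F : Matrix (Fin (n + 1)) (Fin (n + 1)) ℤ)
    (hF : ∀ i j : Fin (n + 1), F i j =
      if (i : ℕ) = (j : ℕ) then 1
      else if (j : ℕ) = (i : ℕ) + 1 then 1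
      else if (i : ℕ) = (j : ℕ) + 1 then -1 else 0)
    (i j : Fin (n + 1)) :
    (-1 : ℤ) ^ ((i : ℕ) + (j : ℕ)) * (F.submatrix i.succAbove j.succAbove).det =
      if (i : ℕ) ≤ (j : ℕ) then
        (Nat.fib ((i : ℕ) + 1) : ℤ) * (Nat.fib (n - (j : ℕ) + 1) : ℤ)
      else
        (-1 : ℤ) ^ ((i : ℕ) + (j : ℕ)) *
          (Nat.fib ((j : ℕ) + 1) : ℤ) * (Nat.fib (n - (i : ℕ) + 1) : ℤ) := by
  have hF' : F = fibTridiag (n + 1) := Matrix.ext hF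
  have hi := i.is_lt
  have hj := j.is_lt
  rw [← adjugate_fin_succ_eq_det_submatrix, hF', adjugate_fibTridiag, of_apply, fibGreen]
  split_ifs
  · rw [show n + 2 - (j + 1) = n - j + 1 by omega]
  · omega
  · omega
  · rw [show n + 1 - i = n - i + 1 by omega]
    ring
end

section
/- Let $G_n$ be the $n \times n$ upper Hessenberg matrix with $0$ on the main diagonal, $1$ in every entry strictly above the diagonal, $-1$ on the subdiagonal, and $0$ below the subdiagonal. Then $\det G_n = f_{n-1}$. -/
open Matrix

private def A (n : ℕ) : Matrix (Fin n) (Fin n) ℤ :=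
  Matrix.of fun i j => if (i : ℕ) = (j : ℕ) + 1 then -1 else if (i : ℕ) < (j : ℕ) then 1 else 0

private lemma detSingle (m : ℕ) :
    ((A (m + 1)).updateRow 0 (Pi.single (0 : Fin (m + 1)) (1 : ℤ))).det = (A m).det := by
  rw [Matrix.det_succ_row_zero, Finset.sum_eq_single (0 : Fin (m + 1))]
  · have hsub : ((A (m + 1)).updateRow 0 (Pi.single (0 : Fin (m + 1)) (1 : ℤ))).submatrix
        Fin.succ (Fin.succAbove 0) = A m := by
      ext i j
      have h1 : Fin.succAbove (0 : Fin (m + 1)) j = j.succ := rfl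
      simp only [Matrix.submatrix_apply, h1, Matrix.updateRow_apply]
      rw [if_neg (Fin.succ_ne_zero i)]
      simp only [A, Matrix.of_apply, Fin.val_succ]
      split_ifs <;> omega
    rw [hsub]
    simp [Matrix.updateRow_apply]
  · intro b _ hb
    have : (Pi.single (0 : Fin (m + 1)) (1 : ℤ) : Fin (m + 1) → ℤ) b = 0 :=
      Pi.single_eq_of_ne hb 1
    simp [Matrix.updateRow_apply, this]
  · simp

private lemma aux_s9 (m : ℕ) : (A (m + 2)).det = (A (m + 1)).det + (A m).det := by
  rw [Matrix.det_succ_column_zero, Finset.sum_eq_single (1 : Fin (m + 2))]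
  · have hsub : (A (m + 2)).submatrix (Fin.succAbove 1) Fin.succ =
        (A (m + 1)).updateRow 0
          (A (m + 1) 0 + (Pi.single (0 : Fin (m + 1)) (1 : ℤ) : Fin (m + 1) → ℤ)) := by
      ext i j
      rcases eq_or_ne i 0 with rfl | hi
      · simp only [Matrix.submatrix_apply, Matrix.updateRow_apply, if_pos rfl, A,
          Matrix.of_apply, Pi.add_apply, Pi.single_apply, eq_self_iff_true]
        have h0 : ((Fin.succAbove (1 : Fin (m + 2)) 0 : Fin (m + 2)) : ℕ) = 0 := rfl
        rw [h0]
        simp only [Fin.val_succ, Fin.ext_iff, Fin.val_zero]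
        split_ifs <;> first | omega | contradiction
      · simp only [Matrix.submatrix_apply, Matrix.updateRow_apply, if_neg hi, A,
          Matrix.of_apply]
        have hvi : (i : ℕ) ≠ 0 := fun h => hi (Fin.ext h)
        have h1 : ((Fin.succAbove (1 : Fin (m + 2)) i : Fin (m + 2)) : ℕ) = (i : ℕ) + 1 := by
          rw [Fin.succAbove]
          rw [if_neg]
          · simp [Fin.val_succ]
          · simp only [Fin.lt_def, Fin.coe_castSucc, Fin.val_one]
            omega
        rw [h1]
        simp only [Fin.val_succ]
        split_ifs <;> omega
    rw [hsub, Matrix.det_updateRow_add, Matrix.updateRow_eq_self, detSingle]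
    have hA : A (m + 2) 1 0 = -1 := by
      simp [A]
    rw [hA]
    simp only [Fin.val_one, pow_one]
    ring
  · intro b _ hb
    have hvb : (b : ℕ) ≠ 1 := fun h => hb (Fin.ext h)
    have : A (m + 2) b 0 = 0 := by
      simp only [A, Matrix.of_apply, Fin.val_zero]
      split_ifs <;> omega
    simp [this]
  · simp

private lemma detA (m : ℕ) : (A (m + 1)).det = Nat.fib m := by
  induction m using Nat.twoStepInduction with
  | zero => simp [Matrix.det_fin_one, A]
  | one => simp [Matrix.det_fin_two, A]
  | more m ih1 ih2 =>
    rw [aux_s9, ih1, ih2, Nat.fib_add_two]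
    push_cast
    ring

/-- The determinant of the `n × n` Hessenberg matrix with `0` on the diagonal,
`1` strictly above the diagonal and `-1` on the subdiagonal is `f_{n-1}`. -/
theorem det_hessenberg_eq_fib_sub_one (n : ℕ) (hn : 1 ≤ n)
    (G : Matrix (Fin n) (Fin n) ℤ)
    (hG : ∀ i j : Fin n, G i j =
      if (i : ℕ) = (j : ℕ) + 1 then -1
      else if (i : ℕ) < (j : ℕ) then 1 else 0) :
    G.det = Nat.fib (n - 1) := by
  obtain ⟨m, rfl⟩ : ∃ m, n = m + 1 := ⟨n - 1, (Nat.succ_pred_eq_of_pos hn).symm⟩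
  have hGA : G = A (m + 1) := by
    ext i j
    rw [hG]
    rfl
  rw [hGA, detA]
  simp
end

section
/- Let $G_n$ be the $n \times n$ matrix with $0$ on the diagonal, $1$ above the diagonal, $-1$ on the subdiagonal, and $0$ below. For indices $1 \le i_1 < \cdots < i_k \le n$, the principal minor of $G_n$ obtained by deleting rows and columns $i_1, \ldots, i_k$ equals $f_{i_1 - 2} f_{i_2 - i_1 - 2} \cdots f_{i_k - i_{k-1} - 2} f_{n - i_k - 1}$. -/
namespace PMH

def Fm (m : ℕ) : Matrix (Fin m) (Fin m) ℤ := fun i j =>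
  if (i:ℕ) = (j:ℕ)+1 then -1 else if (i:ℕ) < (j:ℕ) then 1 else 0

def Km (m : ℕ) : Matrix (Fin m) (Fin m) ℤ := fun i j =>
  if (i:ℕ) = 0 then 1 else
  if (i:ℕ) = (j:ℕ)+1 then -1 else if (i:ℕ) < (j:ℕ) then 1 else 0

lemma succAbove_one_coe (m : ℕ) (i : Fin (m+1)) :
    (((1 : Fin (m+2)).succAbove i : Fin (m+2)) : ℕ) =
      if (i:ℕ) < 1 then (i:ℕ) else (i:ℕ)+1 := by
  rw [Fin.succAbove]
  split_ifs with h1 h2 h3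
  · simp
  · exfalso; rw [Fin.lt_def] at h1; simp at h1 h2; omega
  · exfalso; rw [Fin.lt_def] at h1; simp at h1 h3; omega
  · simp

lemma subF (m : ℕ) :
    (Fm (m+2)).submatrix ((1 : Fin (m+2)).succAbove) Fin.succ = Km (m+1) := by
  ext i j
  have hj := j.isLt
  have hi2 := i.isLt
  simp only [Matrix.submatrix_apply, Fm, Km]
  rcases Nat.lt_or_ge (i:ℕ) 1 with h | h
  · have hi' : (((1 : Fin (m+2)).succAbove i) : ℕ) = (i:ℕ) := by
      rw [succAbove_one_coe]; exact if_pos h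
    rw [hi']; simp only [Fin.val_succ]; split_ifs <;> first | omega | simp_all
  · have hi' : (((1 : Fin (m+2)).succAbove i) : ℕ) = (i:ℕ)+1 := by
      rw [succAbove_one_coe]; exact if_neg (by omega)
    rw [hi']; simp only [Fin.val_succ]; split_ifs <;> first | omega | simp_all
lemma subK0 (m : ℕ) :
    (Km (m+2)).submatrix ((0 : Fin (m+2)).succAbove) Fin.succ = Fm (m+1) := by
  ext i j
  have hj := j.isLt
  have hi2 := i.isLt
  simp only [Matrix.submatrix_apply, Fm, Km, Fin.succAbove_zero, Function.comp,
    Fin.val_succ]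
  split_ifs <;> first | omega | simp_all
lemma subK1 (m : ℕ) :
    (Km (m+2)).submatrix ((1 : Fin (m+2)).succAbove) Fin.succ = Km (m+1) := by
  ext i j
  have hj := j.isLt
  have hi2 := i.isLt
  simp only [Matrix.submatrix_apply, Km]
  rcases Nat.lt_or_ge (i:ℕ) 1 with h | h
  · have hi' : (((1 : Fin (m+2)).succAbove i) : ℕ) = (i:ℕ) := by
      rw [succAbove_one_coe]; exact if_pos h
    rw [hi']; simp only [Fin.val_succ]; split_ifs <;> first | omega | simp_all
  · have hi' : (((1 : Fin (m+2)).succAbove i) : ℕ) = (i:ℕ)+1 := by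
      rw [succAbove_one_coe]; exact if_neg (by omega)
    rw [hi']; simp only [Fin.val_succ]; split_ifs <;> first | omega | simp_all
lemma succ_zero_eq_one (m : ℕ) : (Fin.succ (0 : Fin (m+1))) = (1 : Fin (m+2)) := by
  ext; simp

lemma detF_step (m : ℕ) : (Fm (m+2)).det = (Km (m+1)).det := by
  rw [Matrix.det_succ_column_zero, Fin.sum_univ_succ, Fin.sum_univ_succ,
    succ_zero_eq_one, subF]
  have h0 : Fm (m+2) 0 0 = 0 := by simp [Fm]
  have h1 : Fm (m+2) 1 0 = -1 := by simp [Fm]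
  rw [h0, h1]
  have hz : ∀ i : Fin m, Fm (m+2) i.succ.succ 0 = 0 := by
    intro i; simp [Fm]
  simp only [hz]
  simp

lemma detK_step (m : ℕ) : (Km (m+2)).det = (Fm (m+1)).det + (Km (m+1)).det := by
  rw [Matrix.det_succ_column_zero, Fin.sum_univ_succ, Fin.sum_univ_succ,
    succ_zero_eq_one, subK0, subK1]
  have h0 : Km (m+2) 0 0 = 1 := by simp [Km]
  have h1 : Km (m+2) 1 0 = -1 := by simp [Km]
  rw [h0, h1]
  have hz : ∀ i : Fin m, Km (m+2) i.succ.succ 0 = 0 := by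
    intro i; simp [Km]
  simp only [hz]
  simp

lemma detFK (f : ℤ → ℤ) (hf1 : f (-1) = 1) (hf0 : f 0 = 0)
    (hf : ∀ m : ℤ, f (m + 1) = f m + f (m - 1)) :
    ∀ m : ℕ, (Fm m).det = f ((m:ℤ) - 1) ∧ (Fm (m+1)).det = f m ∧
      (Km (m+1)).det = f ((m:ℤ)+1) := by
  have hF0 : (Fm 0).det = 1 := Matrix.det_isEmpty
  have hF1 : (Fm 1).det = 0 := by
    rw [Matrix.det_fin_one]; simp [Fm]
  have hK1 : (Km 1).det = 1 := by
    rw [Matrix.det_fin_one]; simp [Km]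
  have hfone : f 1 = 1 := by
    have := hf 0; simp [hf0, hf1] at this; linarith
  intro m
  induction m with
  | zero =>
    refine ⟨?_, ?_, ?_⟩
    · rw [hF0, show ((0:ℕ):ℤ) - 1 = -1 by norm_num, hf1]
    · rw [hF1, show ((0:ℕ):ℤ) = 0 by norm_num, hf0]
    · rw [hK1, show ((0:ℕ):ℤ) + 1 = 1 by norm_num, hfone]
  | succ m ih =>
    obtain ⟨h1, h2, h3⟩ := ih
    refine ⟨?_, ?_, ?_⟩
    · rw [h2]; push_cast; ring_nf
    · rw [detF_step m, h3]; push_cast; ring_nf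
    · rw [detK_step m, h2, h3]
      have h4 := hf ((m:ℤ)+1)
      simp only [add_sub_cancel_right] at h4
      push_cast
      linarith

lemma detF (f : ℤ → ℤ) (hf1 : f (-1) = 1) (hf0 : f 0 = 0)
    (hf : ∀ m : ℤ, f (m + 1) = f m + f (m - 1)) (m : ℕ) :
    (Fm m).det = f ((m:ℤ) - 1) := (detFK f hf1 hf0 hf m).1


lemma det_consec {ι : Type} [Fintype ι] [DecidableEq ι]
    (f : ℤ → ℤ) (hf1 : f (-1) = 1) (hf0 : f 0 = 0)
    (hf : ∀ m : ℤ, f (m + 1) = f m + f (m - 1))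
    (M : Matrix ι ι ℤ) (v : ι → ℕ) (lo len : ℕ)
    (hM : ∀ i j, M i j = if v i = v j + 1 then -1 else if v i < v j then 1 else 0)
    (hvinj : Function.Injective v)
    (hrange : ∀ i, lo ≤ v i ∧ v i < lo + len)
    (hsurj : ∀ p : Fin len, ∃ i, v i = lo + p) :
    M.det = f ((len : ℤ) - 1) := by
  have hev : ∀ p : Fin len, v (hsurj p).choose = lo + p := fun p => (hsurj p).choose_spec
  set e : Fin len → ι := fun p => (hsurj p).choose with he
  have hbij : Function.Bijective e := by
    constructor
    · intro p q hpq
      have : v (e p) = v (e q) := by rw [hpq]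
      rw [hev, hev] at this
      exact Fin.ext (by omega)
    · intro i
      obtain ⟨h1, h2⟩ := hrange i
      refine ⟨⟨v i - lo, by omega⟩, hvinj ?_⟩
      rw [hev]
      simp only
      omega
  set eq : Fin len ≃ ι := Equiv.ofBijective e hbij with heq
  have hsub : M.submatrix eq eq = Fm len := by
    ext p q
    have hp : v (eq p) = lo + p := hev p
    have hq : v (eq q) = lo + q := hev q
    rw [Matrix.submatrix_apply, hM, Fm, hp, hq]
    split_ifs <;> omega
  rw [← Matrix.det_submatrix_equiv_self eq M, hsub, detF f hf1 hf0 hf]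


variable {n k : ℕ}

def Aa (a : Fin (k+1) → Fin n) : ℕ → ℕ := fun r =>
  if h : r < k+1 then (a ⟨r, h⟩ : ℕ) else n

def loA (a : Fin (k+1) → Fin n) : ℕ → ℕ := fun r =>
  if r = 0 then 0 else Aa a (r-1) + 1

def cnt (a : Fin (k+1) → Fin n) : ℕ → ℕ := fun x =>
  (Finset.univ.filter fun t : Fin (k+1) => (a t : ℕ) < x).card

lemma A_le_n (a : Fin (k+1) → Fin n) (r : ℕ) : Aa a r ≤ n := by
  rw [Aa]; split_ifs with h
  · exact le_of_lt (a ⟨r, h⟩).isLt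
  · exact le_rfl

lemma A_lt (a : Fin (k+1) → Fin n) (ha : StrictMono a) {r s : ℕ}
    (hrs : r < s) (hs : s ≤ k+1) : Aa a r < Aa a s := by
  have hr : r < k+1 := by omega
  rw [Aa, Aa, dif_pos hr]
  split_ifs with h
  · exact ha (by simp [Fin.lt_def]; omega)
  · exact (a ⟨r, hr⟩).isLt

lemma A_le (a : Fin (k+1) → Fin n) (ha : StrictMono a) {r s : ℕ}
    (hrs : r ≤ s) (hs : s ≤ k+1) : Aa a r ≤ Aa a s := by
  rcases Nat.lt_or_ge r s with h | h
  · exact le_of_lt (A_lt a ha h hs)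
  · have : r = s := by omega
    rw [this]

lemma lo_le_A (a : Fin (k+1) → Fin n) (ha : StrictMono a) {r : ℕ} (hr : r ≤ k+1) :
    loA a r ≤ Aa a r := by
  rw [loA]; split_ifs with h
  · exact Nat.zero_le _
  · have : Aa a (r-1) < Aa a r := A_lt a ha (by omega) hr
    omega

lemma a_lt_lo (a : Fin (k+1) → Fin n) (ha : StrictMono a) {r : ℕ} (hr : r ≤ k+1)
    (t : Fin (k+1)) (ht : (t:ℕ) < r) : (a t : ℕ) < loA a r := by
  have h1 : Aa a (t:ℕ) = (a t : ℕ) := by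
    rw [Aa, dif_pos t.isLt]
  have h2 : Aa a (t:ℕ) ≤ Aa a (r-1) := A_le a ha (by omega) (by omega)
  rw [loA, if_neg (by omega)]
  omega

lemma A_le_a (a : Fin (k+1) → Fin n) (ha : StrictMono a) {r : ℕ}
    (t : Fin (k+1)) (ht : r ≤ (t:ℕ)) : Aa a r ≤ (a t : ℕ) := by
  have h1 : Aa a (t:ℕ) = (a t : ℕ) := by rw [Aa, dif_pos t.isLt]
  have h2 : Aa a r ≤ Aa a (t:ℕ) := A_le a ha ht (by omega)
  omega

lemma card_filter_lt {m r : ℕ} (hr : r ≤ m) :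
    (Finset.univ.filter fun t : Fin m => (t:ℕ) < r).card = r := by
  rcases Nat.lt_or_ge r m with h | h
  · have heq : (Finset.univ.filter fun t : Fin m => (t:ℕ) < r) = Finset.Iio ⟨r, h⟩ := by
      ext t
      simp [Fin.lt_def]
    rw [heq, Fin.card_Iio]
  · have hrm : r = m := le_antisymm hr h
    subst hrm
    have heq : (Finset.univ.filter fun t : Fin r => (t:ℕ) < r) = Finset.univ := by
      ext t; simp [t.isLt]
    rw [heq, Finset.card_univ, Fintype.card_fin]

lemma cnt_eq (a : Fin (k+1) → Fin n) (ha : StrictMono a) {x r : ℕ} (hr : r ≤ k+1)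
    (h1 : loA a r ≤ x) (h2 : x < Aa a r) : cnt a x = r := by
  have heq : (Finset.univ.filter fun t : Fin (k+1) => (a t : ℕ) < x) =
      (Finset.univ.filter fun t : Fin (k+1) => (t:ℕ) < r) := by
    ext t
    simp only [Finset.mem_filter, Finset.mem_univ, true_and]
    constructor
    · intro h
      by_contra hc
      push_neg at hc
      have := A_le_a a ha t hc
      omega
    · intro h
      have := a_lt_lo a ha hr t h
      omega
  rw [cnt, heq, card_filter_lt hr]

lemma exists_interval (a : Fin (k+1) → Fin n) (ha : StrictMono a) (x : Fin n)
    (hx : ∀ t, (a t : ℕ) ≠ (x:ℕ)) :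
    ∃ r, r ≤ k+1 ∧ loA a r ≤ (x:ℕ) ∧ (x:ℕ) < Aa a r := by
  have hP0 : loA a 0 ≤ (x:ℕ) := by simp [loA]
  set P : ℕ → Prop := fun r => loA a r ≤ (x:ℕ) with hPdef
  have hP0' : P 0 := hP0
  set r := Nat.findGreatest P (k+1) with hrdef
  have hr : r ≤ k+1 := Nat.findGreatest_le _
  have hPr : P r := Nat.findGreatest_spec (Nat.zero_le _) hP0'
  rw [hPdef] at hPr
  refine ⟨r, hr, hPr, ?_⟩
  by_contra hc
  push_neg at hc
  rcases Nat.lt_or_ge r (k+1) with h | h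
  · have hne := hx ⟨r, h⟩
    have hAa : Aa a r = (a ⟨r, h⟩ : ℕ) := dif_pos h
    have hPr1 : P (r+1) := by
      rw [hPdef]
      simp only [loA, if_neg (Nat.succ_ne_zero r), Nat.add_sub_cancel]
      omega
    exact Nat.findGreatest_is_greatest (P := P) (n := k+1) (k := r+1) (by omega) (by omega) hPr1
  · have hAa : Aa a r = n := dif_neg (by omega)
    have := x.isLt
    omega


end PMH

open PMH

/-- The principal minor of the Hessenberg matrix `G_n` (zero diagonal, `1`
above the diagonal, `-1` on the subdiagonal) obtained by deleting rows and
columns with (1-based) indices `i_1 < ⋯ < i_k` (here `k + 1` indices given by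
the strictly monotone map `a`, with `i_t = a t + 1`) equals
`f_{i_1 - 2} f_{i_2 - i_1 - 2} ⋯ f_{i_k - i_{k-1} - 2} f_{n - i_k - 1}`,
where `f` is the Fibonacci sequence extended by `f_{-1} = 1`, `f_0 = 0`. -/
theorem principal_minor_hessenberg_fib (n k : ℕ)
    (f : ℤ → ℤ) (hf1 : f (-1) = 1) (hf0 : f 0 = 0)
    (hf : ∀ m : ℤ, f (m + 1) = f m + f (m - 1))
    (G : Matrix (Fin n) (Fin n) ℤ)
    (hG : ∀ i j : Fin n, G i j =
      if (i : ℕ) = (j : ℕ) + 1 then -1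
      else if (i : ℕ) < (j : ℕ) then 1 else 0)
    (a : Fin (k + 1) → Fin n) (ha : StrictMono a) :
    (G.submatrix
        (fun x : ((Finset.univ.image a)ᶜ : Finset (Fin n)) => (x : Fin n))
        (fun x : ((Finset.univ.image a)ᶜ : Finset (Fin n)) => (x : Fin n))).det =
      f ((a 0 : ℤ) - 1) *
        (∏ t : Fin k, f ((a t.succ : ℤ) - (a t.castSucc : ℤ) - 2)) *
        f ((n : ℤ) - (a (Fin.last k) : ℤ) - 2) := by
  classical
  have hmemS : ∀ x : Fin n, x ∈ ((Finset.univ.image a)ᶜ : Finset (Fin n)) ↔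
      ∀ t, a t ≠ x := by
    intro x; simp
  have hcntle : ∀ x : ℕ, cnt a x ≤ k + 1 := by
    intro x
    calc cnt a x ≤ Finset.univ.card := Finset.card_filter_le _ _
    _ = k + 1 := by simp
  set M := G.submatrix
        (fun x : ((Finset.univ.image a)ᶜ : Finset (Fin n)) => (x : Fin n))
        (fun x : ((Finset.univ.image a)ᶜ : Finset (Fin n)) => (x : Fin n)) with hMdef
  set b : ((Finset.univ.image a)ᶜ : Finset (Fin n)) → Fin (k + 2) :=
      fun s => ⟨cnt a ((s : Fin n) : ℕ), by have := hcntle ((s : Fin n) : ℕ); omega⟩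
      with hbdef
  -- block triangularity
  have hbt : M.BlockTriangular b := by
    intro i j hij
    rw [hbdef, Fin.mk_lt_mk] at hij
    have hns : ¬ ((Finset.univ.filter fun t : Fin (k+1) => (a t : ℕ) < ((i : Fin n) : ℕ)) ⊆
        (Finset.univ.filter fun t : Fin (k+1) => (a t : ℕ) < ((j : Fin n) : ℕ))) := by
      intro hsub
      have := Finset.card_le_card hsub
      simp only [cnt] at hij
      omega
    obtain ⟨t, hti, htj⟩ := Finset.not_subset.mp hns
    simp only [Finset.mem_filter, Finset.mem_univ, true_and] at hti htj
    push_neg at htj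
    have hne : (a t : ℕ) ≠ ((j : Fin n) : ℕ) := by
      intro h
      exact (hmemS (j : Fin n)).mp j.2 t (Fin.val_injective h)
    have hjt : ((j : Fin n) : ℕ) < (a t : ℕ) := by omega
    show G ((i : Fin n)) ((j : Fin n)) = 0
    rw [hG]
    rw [if_neg (by omega), if_neg (by omega)]
  rw [Matrix.BlockTriangular.det_fintype hbt]
  -- block determinants
  have hblock : ∀ r : Fin (k + 2), (M.toSquareBlock b r).det =
      f ((Aa a (r : ℕ) : ℤ) - (loA a (r : ℕ) : ℤ) - 1) := by
    intro r
    have hrk : (r : ℕ) ≤ k + 1 := by omega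
    have hloA : loA a (r : ℕ) ≤ Aa a (r : ℕ) := lo_le_A a ha hrk
    have hres : (((Aa a (r:ℕ) - loA a (r:ℕ) : ℕ)) : ℤ) - 1
        = (Aa a (r : ℕ) : ℤ) - (loA a (r : ℕ) : ℤ) - 1 := by omega
    rw [← hres]
    apply det_consec f hf1 hf0 hf _ (fun s => ((s.1 : Fin n) : ℕ))
        (loA a (r : ℕ)) (Aa a (r : ℕ) - loA a (r : ℕ))
    · intro i j
      show M _ _ = _
      rw [hMdef, Matrix.submatrix_apply, hG]
    · intro s1 s2 h
      exact Subtype.ext (Subtype.ext (Fin.ext h))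
    · intro i
      have hbi : cnt a ((i.1 : Fin n) : ℕ) = (r : ℕ) := congrArg Fin.val i.2
      have hxne : ∀ t, (a t : ℕ) ≠ ((i.1 : Fin n) : ℕ) := by
        intro t h
        exact (hmemS _).mp i.1.2 t (Fin.val_injective h)
      obtain ⟨r', hr', h1, h2⟩ := exists_interval a ha (i.1 : Fin n) hxne
      have hcr' : cnt a ((i.1 : Fin n) : ℕ) = r' := cnt_eq a ha hr' h1 h2
      have : r' = (r : ℕ) := by omega
      subst this
      exact ⟨h1, by omega⟩
    · intro p
      have hplt := p.isLt
      have hlt : loA a (r : ℕ) + (p : ℕ) < Aa a (r : ℕ) := by omega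
      have hxn : loA a (r : ℕ) + (p : ℕ) < n :=
        lt_of_lt_of_le hlt (A_le_n a (r : ℕ))
      set x : Fin n := ⟨loA a (r : ℕ) + (p : ℕ), hxn⟩ with hxdef
      have hxS : x ∈ ((Finset.univ.image a)ᶜ : Finset (Fin n)) := by
        rw [hmemS]
        intro t heq
        have hveq : (a t : ℕ) = loA a (r : ℕ) + (p : ℕ) := congrArg Fin.val heq
        rcases Nat.lt_or_ge (t : ℕ) (r : ℕ) with h | h
        · have := a_lt_lo a ha hrk t h
          omega
        · have := A_le_a a ha t h
          omega
      have hbx : b ⟨x, hxS⟩ = r := by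
        rw [hbdef]
        apply Fin.ext
        show cnt a (x : ℕ) = (r : ℕ)
        exact cnt_eq a ha hrk (Nat.le_add_right _ _) hlt
      exact ⟨⟨⟨x, hxS⟩, hbx⟩, rfl⟩
  simp only [hblock]
  -- evaluate the product
  rw [Fin.prod_univ_succ, Fin.prod_univ_castSucc]
  have hA0 : Aa a 0 = (a 0 : ℕ) := by
    rw [Aa, dif_pos (by omega)]
    congr 1
  have hlo0 : loA a 0 = 0 := if_pos rfl
  have hmid : ∀ t : Fin k,
      f ((Aa a ((t.castSucc.succ : Fin (k+2)) : ℕ) : ℤ) -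
          (loA a ((t.castSucc.succ : Fin (k+2)) : ℕ) : ℤ) - 1) =
        f ((a t.succ : ℤ) - (a t.castSucc : ℤ) - 2) := by
    intro t
    have hv : ((t.castSucc.succ : Fin (k+2)) : ℕ) = (t : ℕ) + 1 := by simp
    have hA : Aa a ((t : ℕ) + 1) = (a t.succ : ℕ) := by
      rw [Aa, dif_pos (by omega)]
      congr 1
    have hlo : loA a ((t : ℕ) + 1) = (a t.castSucc : ℕ) + 1 := by
      rw [loA, if_neg (by omega)]
      simp only [Nat.add_sub_cancel]
      rw [Aa, dif_pos (by omega)]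
      congr 2
    rw [hv, hA, hlo]
    congr 1
    push_cast
    ring
  have hlast :
      f ((Aa a (((Fin.last k).succ : Fin (k+2)) : ℕ) : ℤ) -
          (loA a (((Fin.last k).succ : Fin (k+2)) : ℕ) : ℤ) - 1) =
        f ((n : ℤ) - (a (Fin.last k) : ℤ) - 2) := by
    have hv : (((Fin.last k).succ : Fin (k+2)) : ℕ) = k + 1 := by simp
    have hA : Aa a (k + 1) = n := dif_neg (by omega)
    have hlo : loA a (k + 1) = (a (Fin.last k) : ℕ) + 1 := by
      rw [loA, if_neg (by omega)]
      simp only [Nat.add_sub_cancel]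
      rw [Aa, dif_pos (by omega)]
      congr 2
    rw [hv, hA, hlo]
    congr 1
    push_cast
    ring
  have h0 : f ((Aa a ((0 : Fin (k+2)) : ℕ) : ℤ) - (loA a ((0 : Fin (k+2)) : ℕ) : ℤ) - 1) =
      f ((a 0 : ℤ) - 1) := by
    have hv : ((0 : Fin (k+2)) : ℕ) = 0 := rfl
    rw [hv, hA0, hlo0]
    congr 1
  rw [h0, hlast]
  rw [Finset.prod_congr rfl (fun t _ => hmid t)]
  ring
end

section
/- Let $c(n,k)$ be the number of compositions of $n$ with exactly $k$ ones. Then for $k \ge 1$, $c(n,k) = \sum_{j=-1}^{n-k-1} f_j \cdot c(n-j-2, k-1)$, where $f_{-1} = 1$, $f_0 = 0$ and $f$ is the Fibonacci sequence. -/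
/-!
Cut a composition with `k + 1` ones at its first `1`: what precedes it is a composition of some
`t` without ones, what follows it is a composition of `n - t - 1` with `k` ones, and the cut is
reversible. It remains to count the compositions of `t` without ones. Such a composition of
`t + 2` either begins with a `2`, which can be dropped, or with a part `≥ 3`, which can be
lowered by one; so these counts satisfy the Fibonacci recurrence, with initial values `1` (the
empty composition of `0`) and `0`, i.e. they are `f (t - 1)`.
-/

/-- `c n k` is the number of compositions of `n` with exactly `k` parts equal to `1`. -/
noncomputable def numCompositionsWithOnes (n k : ℕ) : ℕ :=
  Nat.card {l : List ℕ // (∀ x ∈ l, 0 < x) ∧ l.sum = n ∧ l.count 1 = k}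

open Finset

theorem List.append_cons_inj_of_notMem_left {α : Type*} {a : α} {p₁ p₂ s₁ s₂ : List α}
    (h₁ : a ∉ p₁) (h₂ : a ∉ p₂) :
    p₁ ++ a :: s₁ = p₂ ++ a :: s₂ ↔ p₁ = p₂ ∧ s₁ = s₂ := by
  induction p₁ generalizing p₂ with
  | nil => cases p₂ <;> grind
  | cons b p₁ ih => cases p₂ <;> grind

def compositionsWithOnes (n k : ℕ) : Finset (List ℕ) :=
  {l ∈ (univ : Finset (Composition n)).map ⟨Composition.blocks, fun _ _ => Composition.ext⟩ |
    l.count 1 = k}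

theorem mem_compositionsWithOnes {n k : ℕ} {l : List ℕ} :
    l ∈ compositionsWithOnes n k ↔ (∀ x ∈ l, 0 < x) ∧ l.sum = n ∧ l.count 1 = k := by
  simp only [compositionsWithOnes, mem_filter, mem_map, mem_univ, true_and]
  constructor
  · rintro ⟨⟨c, rfl⟩, hk⟩
    exact ⟨fun _ => c.blocks_pos, c.blocks_sum, hk⟩
  · rintro ⟨hpos, hsum, hk⟩
    exact ⟨⟨⟨l, hpos _, hsum⟩, rfl⟩, hk⟩

theorem numCompositionsWithOnes_eq_card (n k : ℕ) :
    numCompositionsWithOnes n k = #(compositionsWithOnes n k) := by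
  rw [numCompositionsWithOnes, ← Nat.card_eq_finsetCard]
  exact Nat.card_congr (Equiv.subtypeEquivRight fun _ => mem_compositionsWithOnes.symm)

theorem le_of_mem_compositionsWithOnes {n k : ℕ} {l : List ℕ}
    (hl : l ∈ compositionsWithOnes n k) : k ≤ n := by
  obtain ⟨hpos, rfl, rfl⟩ := mem_compositionsWithOnes.1 hl
  exact List.count_le_length.trans (List.length_le_sum_of_one_le l hpos)

@[simp]
theorem nil_mem_compositionsWithOnes {n k : ℕ} :
    [] ∈ compositionsWithOnes n k ↔ n = 0 ∧ k = 0 := by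
  simp [mem_compositionsWithOnes, eq_comm]

@[simp]
theorem cons_mem_compositionsWithOnes_zero {n a : ℕ} {r : List ℕ} :
    a :: r ∈ compositionsWithOnes n 0 ↔ 2 ≤ a ∧ a ≤ n ∧ r ∈ compositionsWithOnes (n - a) 0 := by
  simp only [mem_compositionsWithOnes, List.mem_cons, forall_eq_or_imp, List.sum_cons,
    List.count_cons, beq_iff_eq]
  grind

theorem compositionsWithOnes_zero_zero : compositionsWithOnes 0 0 = {[]} := by
  ext (_ | ⟨a, r⟩) <;> simp
  omega

theorem compositionsWithOnes_one_zero : compositionsWithOnes 1 0 = ∅ := by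
  ext (_ | ⟨a, r⟩) <;> simp
  omega

theorem card_compositionsWithOnes_zero_add_two (t : ℕ) :
    #(compositionsWithOnes (t + 2) 0) =
      #(compositionsWithOnes (t + 1) 0) + #(compositionsWithOnes t 0) := by
  rw [← card_disjSum, eq_comm]
  refine card_bij (fun x _ => Sum.elim (List.modifyHead (· + 1)) (List.cons 2) x) ?_ ?_ ?_
  · rintro ((_ | ⟨a, r⟩) | l) hl
    · simp at hl
    · simp_all
      grind
    · simp_all
  · rintro ((_ | ⟨a₁, r₁⟩) | l₁) h₁ ((_ | ⟨a₂, r₂⟩) | l₂) h₂ h <;> simp_all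
  · rintro (_ | ⟨a, r⟩) hl
    · simp at hl
    · by_cases ha : a = 2
      · subst ha
        exact ⟨.inr r, by simp_all⟩
      · refine ⟨.inl ((a - 1) :: r), ?_, ?_⟩
        · simp_all
          grind
        · simp_all
          omega

theorem card_compositionsWithOnes_zero_eq (f : ℤ → ℤ) (hf1 : f (-1) = 1) (hf0 : f 0 = 0)
    (hf : ∀ m : ℤ, f (m + 1) = f m + f (m - 1)) :
    ∀ t : ℕ, (#(compositionsWithOnes t 0) : ℤ) = f (t - 1)
  | 0 => by simp [compositionsWithOnes_zero_zero, hf1]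
  | 1 => by simp [compositionsWithOnes_one_zero, hf0]
  | t + 2 => by
    rw [card_compositionsWithOnes_zero_add_two, Nat.cast_add,
      card_compositionsWithOnes_zero_eq f hf1 hf0 hf (t + 1),
      card_compositionsWithOnes_zero_eq f hf1 hf0 hf t]
    push_cast
    rw [show (t : ℤ) + 2 - 1 = t + 1 by ring, add_sub_cancel_right, hf]

theorem card_compositionsWithOnes_succ (n k : ℕ) :
    #(compositionsWithOnes n (k + 1)) = ∑ t ∈ range (n - k),
      #(compositionsWithOnes t 0) * #(compositionsWithOnes (n - t - 1) k) := by
  simp_rw [← card_product]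
  rw [← card_sigma, eq_comm]
  refine card_bij (fun x _ => x.2.1 ++ 1 :: x.2.2) ?_ ?_ ?_
  · rintro ⟨t, p, s⟩ h
    simp only [mem_sigma, mem_range, mem_product, mem_compositionsWithOnes] at h ⊢
    grind
  · rintro ⟨t₁, p₁, s₁⟩ h₁ ⟨t₂, p₂, s₂⟩ h₂ h
    simp only [mem_sigma, mem_product, mem_compositionsWithOnes] at h₁ h₂
    obtain ⟨rfl, rfl⟩ := (List.append_cons_inj_of_notMem_left
      (List.count_eq_zero.1 h₁.2.1.2.2) (List.count_eq_zero.1 h₂.2.1.2.2)).1 h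
    grind
  · intro l hl
    obtain ⟨hpos, hsum, hcount⟩ := mem_compositionsWithOnes.1 hl
    have h1 : 1 ∈ l := List.count_pos_iff.1 (by omega)
    obtain ⟨p, s, rfl, hp⟩ := List.eq_append_cons_of_mem h1
    have hs : s ∈ compositionsWithOnes (n - p.sum - 1) k := by
      rw [mem_compositionsWithOnes]
      grind
    have hks := le_of_mem_compositionsWithOnes hs
    refine ⟨⟨p.sum, p, s⟩, ?_, rfl⟩
    simp only [mem_sigma, mem_range, mem_product, mem_compositionsWithOnes] at hs ⊢
    grind

/-- The paper's summation index is `j = t - 1`. -/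
theorem numCompositionsWithOnes_recurrence (n k : ℕ) (hk : 1 ≤ k) (hkn : k ≤ n)
    (f : ℤ → ℤ) (hf1 : f (-1) = 1) (hf0 : f 0 = 0)
    (hf : ∀ m : ℤ, f (m + 1) = f m + f (m - 1)) :
    (numCompositionsWithOnes n k : ℤ) =
      ∑ t ∈ Finset.range (n - k + 1),
        f ((t : ℤ) - 1) * (numCompositionsWithOnes (n - t - 1) (k - 1) : ℤ) := by
  obtain ⟨k, rfl⟩ := Nat.exists_eq_add_of_le' hk
  rw [numCompositionsWithOnes_eq_card, card_compositionsWithOnes_succ,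
    show n - (k + 1) + 1 = n - k by omega, Nat.add_sub_cancel]
  push_cast
  refine sum_congr rfl fun t _ => ?_
  rw [card_compositionsWithOnes_zero_eq f hf1 hf0 hf, numCompositionsWithOnes_eq_card]
end

section
/- Let $F_n$ be the $n \times n$ tridiagonal matrix with $1$ on the main diagonal and superdiagonal and $-1$ on the subdiagonal. The characteristic polynomial of $F_n$ (i.e., $\det(xI - F_n)$) equals $f_{n+1}(x-1)$, where $f_m(x)$ are the Fibonacci polynomials defined by $f_1(x)=1$, $f_2(x)=x$, $f_{m+1}(x) = x f_m(x) + f_{m-1}(x)$. -/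
/-!
Expanding `det (X • 1 - F_n)` along its first row gives the three-term recurrence
`D (n + 2) = (X - 1) * D (n + 1) + D n`, which is the recurrence of `f (n + 3) ∘ (X - 1)`;
the initial values `D 0 = 1 = f 1` and `D 1 = X - 1 = f 2 ∘ (X - 1)` also agree.
-/

open Polynomial

namespace Matrix

variable {R : Type*} [CommRing R]

def tridiagonal (n : ℕ) (a b c : R) : Matrix (Fin n) (Fin n) R :=
  of fun i j =>
    if (i : ℕ) = j then a else if (j : ℕ) = i + 1 then b else if (i : ℕ) = j + 1 then c else 0

theorem tridiagonal_apply (n : ℕ) (a b c : R) (i j : Fin n) :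
    tridiagonal n a b c i j =
      if (i : ℕ) = j then a else if (j : ℕ) = i + 1 then b else if (i : ℕ) = j + 1 then c else 0 :=
  rfl

theorem submatrix_succ_tridiagonal (n : ℕ) (a b c : R) :
    (tridiagonal (n + 1) a b c).submatrix Fin.succ Fin.succ = tridiagonal n a b c := by
  ext i j
  simp [tridiagonal_apply]

theorem charmatrix_tridiagonal (n : ℕ) (a b c : R) :
    charmatrix (tridiagonal n a b c) = tridiagonal n (X - C a) (-C b) (-C c) := by
  ext i j : 1
  by_cases hij : i = j
  · subst hij
    rw [charmatrix_apply_eq, tridiagonal_apply, tridiagonal_apply]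
    simp only [if_true]
  · rw [charmatrix_apply_ne _ _ _ hij, tridiagonal_apply, tridiagonal_apply,
      if_neg (Fin.val_ne_of_ne hij), if_neg (Fin.val_ne_of_ne hij)]
    split_ifs <;> simp

theorem det_tridiagonal_succ_succ (n : ℕ) (a b c : R) :
    (tridiagonal (n + 2) a b c).det =
      a * (tridiagonal (n + 1) a b c).det - b * c * (tridiagonal n a b c).det := by
  -- the minor of the entry at `(0, 1)` has first column `(c, 0, …, 0)`
  have hminor : ((tridiagonal (n + 2) a b c).submatrix Fin.succ (Fin.succ 0).succAbove).det =
      c * (tridiagonal n a b c).det := by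
    rw [det_succ_column_zero, Fin.sum_univ_succ, Finset.sum_eq_zero, add_zero, Fin.succAbove_zero,
      submatrix_submatrix]
    · have hsub : (tridiagonal (n + 2) a b c).submatrix (Fin.succ ∘ Fin.succ)
          ((Fin.succ 0).succAbove ∘ Fin.succ) = tridiagonal n a b c := by
        ext i j
        simp [tridiagonal_apply]
      rw [hsub]
      simp [tridiagonal_apply]
    · intro i _
      simp [tridiagonal_apply]
  rw [det_succ_row_zero, Fin.sum_univ_succ, Fin.sum_univ_succ, Finset.sum_eq_zero, add_zero,
    Fin.succAbove_zero, submatrix_succ_tridiagonal, hminor]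
  · simp only [Fin.coe_ofNat_eq_mod, Nat.zero_mod, pow_zero, tridiagonal_apply, ↓reduceIte,
      Fin.succ_zero_eq_one, Nat.one_mod, pow_one, zero_ne_one, zero_add]
    ring
  · intro j _
    simp [tridiagonal_apply]

theorem det_tridiagonal_eq {u : ℕ → R} (a b c : R) (h0 : u 0 = 1) (h1 : u 1 = a)
    (hu : ∀ m, u (m + 2) = a * u (m + 1) - b * c * u m) (n : ℕ) :
    (tridiagonal n a b c).det = u n := by
  induction n using Nat.twoStepInduction with
  | zero => simp [h0]
  | one => simp [h1, tridiagonal_apply]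
  | more m ihm ihm1 => rw [det_tridiagonal_succ_succ, ihm, ihm1, hu]

end Matrix

/-- The characteristic polynomial of the tridiagonal Fibonacci matrix `F_n`
equals the Fibonacci polynomial `f_{n+1}` composed with `x - 1`. -/
theorem charpoly_tridiagonal_eq_fibPoly (n : ℕ)
    (Fn : Matrix (Fin n) (Fin n) ℤ)
    (hFn : ∀ i j : Fin n, Fn i j =
      if (i : ℕ) = (j : ℕ) then 1
      else if (j : ℕ) = (i : ℕ) + 1 then 1
      else if (i : ℕ) = (j : ℕ) + 1 then -1 else 0)
    (F : ℕ → Polynomial ℤ) (h1 : F 1 = 1) (h2 : F 2 = Polynomial.X)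
    (hrec : ∀ m : ℕ, F (m + 3) = Polynomial.X * F (m + 2) + F (m + 1)) :
    Fn.charpoly = (F (n + 1)).comp (Polynomial.X - 1) := by
  have hFn_eq : Fn = Matrix.tridiagonal n 1 1 (-1) := Matrix.ext hFn
  rw [Matrix.charpoly, hFn_eq, Matrix.charmatrix_tridiagonal]
  refine Matrix.det_tridiagonal_eq (u := fun m => (F (m + 1)).comp (X - 1)) _ _ _ ?_ ?_
    (fun m => ?_) n
  · simp [h1]
  · simp [h2]
  · rw [hrec, add_comp, mul_comp, X_comp]
    simp
end
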